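/- arXiv:1212.4398 — 7 statements merged into one kernel-verified Lean document; each statement's English description precedes it below -/
import Mathlib

section
/- Every A-admissible partial orientation of a simple graph G is acyclic. That is, if a partial orientation O of G contains a directed cycle of steps, then O has a potential cycle with nonpositive score (assuming the parameter list A admits a point x with x_i - x_j < a_{ij} for all edges {v_i,v_j}). -/
open Finset SimpleGraph
open scoped Classical

variable {V : Type*} [Fintype V] [DecidableEq V]

/-- `O` is a partial orientation of `G`: a set of steps along edges of `G`,
containing at most one direction per edge. -/
def IsPO (G : SimpleGraph V) (O : Finset (V × V)) : Prop :=
  ∀ p ∈ O, G.Adj p.1 p.2 ∧ (p.2, p.1) ∉ O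

/-- A total orientation orients every edge. -/
def IsTotalOn (G : SimpleGraph V) (O : Finset (V × V)) : Prop :=
  ∀ u v : V, G.Adj u v → (u, v) ∈ O ∨ (v, u) ∈ O

/-- `O` contains a directed cycle of steps. -/
def HasDirCycle (O : Finset (V × V)) : Prop :=
  ∃ (k : ℕ) (c : Fin (k + 1) → V), 1 ≤ k ∧ Function.Injective c ∧
    ∀ i : Fin (k + 1), (c i, c (i + 1)) ∈ O

/-- An acyclic partial orientation. -/
def IsAcyclicPO (G : SimpleGraph V) (O : Finset (V × V)) : Prop :=
  IsPO G O ∧ ¬ HasDirCycle O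

/-- Indegree of vertex `v` in the orientation `O`. -/
def indeg (O : Finset (V × V)) (v : V) : ℕ := (O.filter (fun p => p.2 = v)).card

/-- A potential cycle for `O`: a directed cycle of steps, each compatible with `O`
(i.e. whose reversal is not in `O`). -/
def IsPotCycle (G : SimpleGraph V) (O : Finset (V × V)) {k : ℕ} (c : Fin (k + 1) → V) : Prop :=
  1 ≤ k ∧ Function.Injective c ∧
    ∀ i : Fin (k + 1), G.Adj (c i) (c (i + 1)) ∧ (c (i + 1), c i) ∉ O

/-- Score of a step compatible with `O`, with respect to the parameter list `a`. -/
def stepScore (a : V → V → ℝ) (O : Finset (V × V)) (p : V × V) : ℝ :=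
  if p ∈ O then -(a p.2 p.1) else a p.1 p.2

/-- Score of a potential cycle. -/
def cycScore (a : V → V → ℝ) (O : Finset (V × V)) {k : ℕ} (c : Fin (k + 1) → V) : ℝ :=
  ∑ i : Fin (k + 1), stepScore a O (c i, c (i + 1))

/-- `O` is `a`-admissible: every potential cycle has strictly positive score. -/
def IsAdmissible (G : SimpleGraph V) (a : V → V → ℝ) (O : Finset (V × V)) : Prop :=
  ∀ (k : ℕ) (c : Fin (k + 1) → V), IsPotCycle G O c → 0 < cycScore a O c

/-- `O` is almost-`a`-admissible: not admissible, but no potential cycle has negative score. -/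
def IsAlmostAdmissible (G : SimpleGraph V) (a : V → V → ℝ) (O : Finset (V × V)) : Prop :=
  ¬ IsAdmissible G a O ∧
    ∀ (k : ℕ) (c : Fin (k + 1) → V), IsPotCycle G O c → 0 ≤ cycScore a O c

/-- The parameter list condition: the central region of `Σ_G(A)` is nonempty. -/
def HasCentral (G : SimpleGraph V) (a : V → V → ℝ) : Prop :=
  ∃ x : V → ℝ, ∀ u v : V, G.Adj u v → x u - x v < a u v

/-- Number of edges of `G_•` from `i` to vertices outside `W` (including the edge to the sink). -/
noncomputable def dW (G : SimpleGraph V) (W : Finset V) (i : V) : ℕ :=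
  1 + (Finset.univ.filter (fun u => u ∉ W ∧ G.Adj i u)).card

/-- `c` is a parking function of `G_•` with respect to the added sink `v₀`. -/
def IsPF (G : SimpleGraph V) (c : V → ℤ) : Prop :=
  ∀ W : Finset V, W.Nonempty → ∃ i ∈ W, 0 ≤ c i ∧ c i < dW G W i

/-- Every `A`-admissible partial orientation is acyclic: if a partial orientation contains a
directed cycle of steps, then it has a potential cycle with nonpositive score. -/
theorem admissible_implies_acyclic (G : SimpleGraph V) (a : V → V → ℝ)
    (O : Finset (V × V)) (hA : HasCentral G a) (hO : IsPO G O) (hcyc : HasDirCycle O) :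
    ∃ (k : ℕ) (c : Fin (k + 1) → V), IsPotCycle G O c ∧ cycScore a O c ≤ 0 := by
  obtain ⟨k, c, hk, hinj, hmem⟩ := hcyc
  obtain ⟨x, hx⟩ := hA
  refine ⟨k, c, ⟨hk, hinj, fun i => ⟨(hO _ (hmem i)).1, (hO _ (hmem i)).2⟩⟩, ?_⟩
  have hscore : cycScore a O c = ∑ i : Fin (k + 1), -(a (c (i + 1)) (c i)) := by
    unfold cycScore stepScore
    exact Finset.sum_congr rfl fun i _ => by simp [hmem i]
  rw [hscore]
  have htel : ∑ i : Fin (k + 1), (x (c (i + 1)) - x (c i)) = 0 := by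
    rw [Finset.sum_sub_distrib]
    rw [Fintype.sum_equiv (Equiv.addRight (1 : Fin (k + 1))) (fun i => x (c (i + 1)))
      (fun i => x (c i)) (fun i => rfl)]
    ring
  have hlt : ∑ i : Fin (k + 1), (x (c (i + 1)) - x (c i)) <
      ∑ i : Fin (k + 1), a (c (i + 1)) (c i) := by
    apply Finset.sum_lt_sum_of_nonempty ⟨0, Finset.mem_univ 0⟩
    intro i _
    exact hx _ _ ((hO _ (hmem i)).1).symm
  rw [htel] at hlt
  simp only [Finset.sum_neg_distrib]
  linarith
end

section
/- Let G be a simple graph and G_• the graph obtained by adding a sink v_0 adjacent to all vertices of G. The set of indegree sequences of acyclic partial orientations of G equals the set of parking functions of G_• with respect to v_0. -/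
open Finset SimpleGraph
open scoped Classical

variable {V : Type*} [Fintype V] [DecidableEq V]

/-
An acyclic partial orientation restricted to a nonempty `W` has a source `i` in `W`, so every step
into `i` comes from a neighbour outside `W` and `indeg i < d_W(i)`. Conversely, given a parking
function `c`, repeatedly pick among the unprocessed vertices `W` one with `0 ≤ c i < d_W(i)` and
orient `c i` edges into it from processed neighbours. No step ever leaves an unprocessed vertex,
so no cycle can pass through the new one.
-/

theorem Function.exists_mem_periodicPts {α : Type*} [Finite α] [Nonempty α] (f : α → α) :
    ∃ z, z ∈ Function.periodicPts f := by
  obtain ⟨x⟩ := ‹Nonempty α›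
  obtain ⟨m, n, heq, hne⟩ : ∃ m n, f^[m] x = f^[n] x ∧ m ≠ n := by
    simpa [Function.Injective] using not_injective_infinite_finite (f^[·] x)
  rcases lt_or_gt_of_ne hne with hlt | hlt
  · refine ⟨f^[m] x, Function.mk_mem_periodicPts (n := n - m) (by omega) ?_⟩
    rw [Function.IsPeriodicPt, Function.IsFixedPt, ← Function.iterate_add_apply,
      Nat.sub_add_cancel hlt.le, heq]
  · refine ⟨f^[n] x, Function.mk_mem_periodicPts (n := m - n) (by omega) ?_⟩
    rw [Function.IsPeriodicPt, Function.IsFixedPt, ← Function.iterate_add_apply,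
      Nat.sub_add_cancel hlt.le, heq]

/-- The cycle runs backwards along a periodic orbit of `f`. -/
theorem hasDirCycle_of_pred {β α : Type*} {O : Finset (β × β)} [Finite α] [Nonempty α] (v : α → β)
    (hv : Function.Injective v) (f : α → α) (hf : ∀ x, (v (f x), v x) ∈ O)
    (hfix : ∀ x, f x ≠ x) : HasDirCycle O := by
  obtain ⟨z, hz⟩ := Function.exists_mem_periodicPts f
  have hpos := Function.minimalPeriod_pos_of_mem_periodicPts hz
  have hne_one : Function.minimalPeriod f z ≠ 1 := fun h =>
    hfix z (Function.minimalPeriod_eq_one_iff_isFixedPt.mp h)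
  obtain ⟨k, hk⟩ : ∃ k, Function.minimalPeriod f z = k + 1 :=
    ⟨_, (Nat.succ_pred_eq_of_pos hpos).symm⟩
  refine ⟨k, fun j => v (f^[(Fin.rev j : ℕ)] z), by omega, ?_, fun i => ?_⟩
  · intro a b hab
    have hlt : ∀ j : Fin (k + 1), (Fin.rev j : ℕ) ∈ Set.Iio (Function.minimalPeriod f z) :=
      fun j => by rw [hk]; exact j.rev.isLt
    exact Fin.rev_injective (Fin.ext (Function.iterate_injOn_Iio_minimalPeriod
      (hlt a) (hlt b) (hv hab)))
  · have hstep : f^[(Fin.rev i : ℕ)] z = f (f^[(Fin.rev (i + 1) : ℕ)] z) := by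
      rw [← Function.iterate_succ_apply' f, ← Function.iterate_mod_minimalPeriod_eq
        (n := Nat.succ _)]
      congr 1
      rw [hk, Fin.val_rev, Fin.val_rev, Fin.val_add_one]
      split_ifs with hi
      · subst hi
        simp
      · have := Fin.val_lt_last hi
        rw [Nat.mod_eq_of_lt (by omega)]
        omega
    simpa only [hstep] using hf _

theorem hasDirCycle_of_forall_exists_pred {β : Type*} {O : Finset (β × β)}
    (hloop : ∀ u, (u, u) ∉ O) {W : Finset β} (hW : W.Nonempty)
    (hpred : ∀ i ∈ W, ∃ u ∈ W, (u, i) ∈ O) : HasDirCycle O := by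
  have : Nonempty W := hW.to_subtype
  choose f hfW hf using fun i : W => hpred i i.2
  refine hasDirCycle_of_pred (Subtype.val : W → β) Subtype.val_injective
    (fun i => ⟨f i, hfW i⟩) hf fun i hi => hloop i ?_
  have hfi : f i = i := congrArg Subtype.val hi
  simpa only [hfi] using hf i

theorem IsAcyclicPO.exists_source {β : Type*} {G : SimpleGraph β} {O : Finset (β × β)}
    (h : IsAcyclicPO G O) {W : Finset β} (hW : W.Nonempty) :
    ∃ i ∈ W, ∀ u ∈ W, (u, i) ∉ O := by
  by_contra! hpred
  exact h.2 (hasDirCycle_of_forall_exists_pred (fun u hu => G.irrefl (h.1 _ hu).1) hW hpred)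

theorem indeg_lt_dW_of_source {G : SimpleGraph V} {O : Finset (V × V)} (hO : IsPO G O)
    {W : Finset V} {i : V} (hi : ∀ u ∈ W, (u, i) ∉ O) : indeg O i < dW G W i := by
  have hle : indeg O i ≤ (Finset.univ.filter (fun u => u ∉ W ∧ G.Adj i u)).card := by
    refine Finset.card_le_card_of_injOn Prod.fst (fun p hp => ?_) ?_
    · obtain ⟨hpO, rfl⟩ := Finset.mem_filter.mp hp
      exact Finset.mem_filter.mpr ⟨Finset.mem_univ _, fun hpW => hi _ hpW hpO,
        (hO p hpO).1.symm⟩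
    · intro p hp q hq hpq
      exact Prod.ext hpq ((Finset.mem_filter.mp hp).2.trans (Finset.mem_filter.mp hq).2.symm)
  unfold dW
  omega

theorem IsAcyclicPO.isPF_indeg {G : SimpleGraph V} {O : Finset (V × V)} (h : IsAcyclicPO G O) :
    IsPF G (fun v => (indeg O v : ℤ)) := by
  intro W hW
  obtain ⟨i, hiW, hi⟩ := h.exists_source hW
  exact ⟨i, hiW, Int.natCast_nonneg _, Int.ofNat_lt.mpr (indeg_lt_dW_of_source h.1 hi)⟩

section InSteps

variable {β : Type*} [DecidableEq β] {G : SimpleGraph β} {O : Finset (β × β)} {S : Finset β}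
  {i : β}

theorem IsPO.union_product_singleton (hO : IsPO G O) (hi : ∀ p ∈ O, p.1 ≠ i)
    (hS : ∀ u ∈ S, G.Adj u i) : IsPO G (O ∪ S ×ˢ {i}) := by
  intro p hp
  simp only [Finset.mem_union, Finset.mem_product, Finset.mem_singleton] at hp ⊢
  rcases hp with hp | ⟨hpS, rfl⟩
  · exact ⟨(hO p hp).1, not_or.mpr ⟨(hO p hp).2, fun h => hi p hp h.2⟩⟩
  · exact ⟨hS _ hpS, not_or.mpr ⟨fun h => hi _ h rfl, fun h => (hS _ hpS).ne h.2⟩⟩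

/-- A cycle through `i` would have to leave `i`, but no step of `O ∪ S ×ˢ {i}` does. -/
theorem not_hasDirCycle_union_product_singleton (hO : ¬ HasDirCycle O)
    (hi : ∀ p ∈ O, p.1 ≠ i) (hiS : i ∉ S) : ¬ HasDirCycle (O ∪ S ×ˢ {i}) := by
  rintro ⟨k, c, hk, hinj, hc⟩
  have hleaves : ∀ j, c j ≠ i := by
    intro j hj
    rcases Finset.mem_union.mp (hc j) with h | h
    · exact hi _ h hj
    · exact hiS (hj ▸ (Finset.mem_product.mp h).1)
  refine hO ⟨k, c, hk, hinj, fun j => ?_⟩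
  rcases Finset.mem_union.mp (hc j) with h | h
  · exact h
  · exact absurd (Finset.mem_singleton.mp (Finset.mem_product.mp h).2) (hleaves (j + 1))

theorem indeg_union_product_singleton (hi : ∀ p ∈ O, p.2 ≠ i) (v : β) :
    indeg (O ∪ S ×ˢ {i}) v = indeg O v + if v = i then S.card else 0 := by
  have hdisj : Disjoint (O.filter (fun p => p.2 = v)) ((S ×ˢ {i}).filter (fun p => p.2 = v)) :=
    Finset.disjoint_left.mpr fun p hpO hpT => hi p (Finset.mem_filter.mp hpO).1
      (Finset.mem_singleton.mp (Finset.mem_product.mp (Finset.mem_filter.mp hpT).1).2)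
  unfold indeg
  rw [Finset.filter_union, Finset.card_union_of_disjoint hdisj]
  congr 1
  split_ifs with hv
  · subst hv
    rw [Finset.filter_true_of_mem fun p hp => Finset.mem_singleton.mp (Finset.mem_product.mp hp).2,
      Finset.card_product, Finset.card_singleton, mul_one]
  · rw [Finset.filter_false_of_mem fun p hp (h : p.2 = v) => hv
      (h ▸ Finset.mem_singleton.mp (Finset.mem_product.mp hp).2), Finset.card_empty]

end InSteps

structure IsPartialRealization (G : SimpleGraph V) (c : V → ℤ) (W : Finset V)
    (O : Finset (V × V)) : Prop where
  isAcyclicPO : IsAcyclicPO G O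
  notMem_of_mem : ∀ p ∈ O, p.1 ∉ W ∧ p.2 ∉ W
  indeg_eq : ∀ v ∉ W, c v = indeg O v

namespace IsPartialRealization

variable {G : SimpleGraph V} {c : V → ℤ}

theorem univ_empty : IsPartialRealization G c Finset.univ ∅ where
  isAcyclicPO := ⟨fun _ hp => absurd hp (Finset.notMem_empty _), fun ⟨_, _, _, _, hc⟩ =>
    Finset.notMem_empty _ (hc 0)⟩
  notMem_of_mem _ hp := absurd hp (Finset.notMem_empty _)
  indeg_eq v hv := absurd (Finset.mem_univ v) hv

theorem exists_erase (hc : IsPF G c) {W : Finset V} {O : Finset (V × V)}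
    (h : IsPartialRealization G c W O) (hW : W.Nonempty) :
    ∃ i ∈ W, ∃ O', IsPartialRealization G c (W.erase i) O' := by
  obtain ⟨i, hiW, hci0, hcid⟩ := hc W hW
  obtain ⟨S, hSN, hScard⟩ :=
    Finset.exists_subset_card_eq (s := Finset.univ.filter (fun u => u ∉ W ∧ G.Adj i u))
      (n := (c i).toNat) (by unfold dW at hcid; omega)
  have hS : ∀ u ∈ S, u ∉ W ∧ G.Adj i u := fun u hu => (Finset.mem_filter.mp (hSN hu)).2
  have hout : ∀ p ∈ O, p.1 ≠ i := fun p hp he => (h.notMem_of_mem p hp).1 (he ▸ hiW)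
  have hin : ∀ p ∈ O, p.2 ≠ i := fun p hp he => (h.notMem_of_mem p hp).2 (he ▸ hiW)
  refine ⟨i, hiW, O ∪ S ×ˢ {i}, ⟨⟨?_, ?_⟩, fun p hp => ?_, fun v hv => ?_⟩⟩
  · exact h.isAcyclicPO.1.union_product_singleton hout fun u hu => (hS u hu).2.symm
  · exact not_hasDirCycle_union_product_singleton h.isAcyclicPO.2 hout
      fun hiS => (hS i hiS).1 hiW
  · simp only [Finset.mem_union, Finset.mem_product, Finset.mem_singleton] at hp
    rcases hp with hp | ⟨hpS, hpi⟩
    · exact ⟨fun h' => (h.notMem_of_mem p hp).1 (Finset.mem_of_mem_erase h'),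
        fun h' => (h.notMem_of_mem p hp).2 (Finset.mem_of_mem_erase h')⟩
    · exact ⟨fun h' => (hS _ hpS).1 (Finset.mem_of_mem_erase h'),
        hpi ▸ Finset.notMem_erase i W⟩
  · rw [indeg_union_product_singleton hin]
    split_ifs with hvi
    · subst hvi
      have hzero : indeg O v = 0 :=
        Finset.card_eq_zero.mpr (Finset.filter_eq_empty_iff.mpr hin)
      rw [hzero, hScard]
      omega
    · rw [add_zero]
      exact h.indeg_eq v fun hvW => hv (Finset.mem_erase.mpr ⟨hvi, hvW⟩)

theorem exists_empty (hc : IsPF G c) {W : Finset V} {O : Finset (V × V)}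
    (h : IsPartialRealization G c W O) : ∃ O', IsPartialRealization G c ∅ O' := by
  induction W using Finset.strongInduction generalizing O with
  | H W ih =>
    rcases W.eq_empty_or_nonempty with rfl | hW
    · exact ⟨O, h⟩
    · obtain ⟨i, hiW, O', h'⟩ := h.exists_erase hc hW
      exact ih _ (Finset.erase_ssubset hiW) h'

end IsPartialRealization

/-- The indegree sequences of acyclic partial orientations of `G` are exactly the parking
functions of `G_•` with respect to the sink `v₀`. -/
theorem indeg_acyclic_eq_parking (G : SimpleGraph V) :
    {c : V → ℤ | ∃ O : Finset (V × V), IsAcyclicPO G O ∧ ∀ v : V, c v = indeg O v} =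
      {c : V → ℤ | IsPF G c} := by
  ext c
  constructor
  · rintro ⟨O, hO, hc⟩
    obtain rfl : c = fun v => (indeg O v : ℤ) := funext hc
    exact hO.isPF_indeg
  · intro hc
    obtain ⟨O, hO⟩ := IsPartialRealization.univ_empty.exists_empty hc
    exact ⟨O, hO.isAcyclicPO, fun v => hO.indeg_eq v (Finset.notMem_empty v)⟩
end

section
/- Let O be an A-admissible partial orientation of a simple graph G, and let W ⊆ V be a set of vertices such that (1) no step (w,u) ∈ O has w ∈ W and u ∉ W, and (2) there is at least one blank edge {u,w} of O with u ∉ W and w ∈ W. Then there exist u ∉ W and w ∈ W such that O ∪ {(u,w)} is A-admissible. -/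
open Finset SimpleGraph
open scoped Classical

variable {V : Type*} [Fintype V] [DecidableEq V]

/-!
An admissible orientation has a strict potential `y`: `y i - y j` lies strictly below the score
of every compatible step. It is read off from shortest simple paths for the scores lowered by a
small `ε > 0`, small enough that no potential cycle becomes negative.

Among the blank edges leaving `W`, orient into `W` the one `{w, u}` of least slack
`a w u - (y w - y u)`, and raise `y` on `W` by that slack. The raised potential still bounds every
compatible step of the new orientation, strictly except on steps leaving `W` and on the new step
`(u, w)`. A potential cycle made of such steps only would have to traverse `(w, u)`, which is no
longer compatible; as potential differences sum to zero around a cycle, every potential cycle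
keeps a positive score.
-/

section PathWeight

variable {α : Type*}

def pathWeight (w : α → α → ℝ) : List α → ℝ
  | x :: y :: l => w x y + pathWeight w (y :: l)
  | _ => 0

variable {w : α → α → ℝ}

@[simp] lemma pathWeight_singleton (x : α) : pathWeight w [x] = 0 := rfl

@[simp] lemma pathWeight_cons_cons (x y : α) (l : List α) :
    pathWeight w (x :: y :: l) = w x y + pathWeight w (y :: l) := rfl

lemma pathWeight_cons_of_head?_eq {x y : α} {l : List α} (h : l.head? = some y) :
    pathWeight w (x :: l) = w x y + pathWeight w l := by
  obtain ⟨l, rfl⟩ := List.head?_eq_some_iff.mp h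
  rfl

lemma pathWeight_append_cons (x : α) (t : List α) :
    ∀ s : List α, pathWeight w (s ++ x :: t) = pathWeight w (s ++ [x]) + pathWeight w (x :: t)
  | [] => by simp
  | [y] => by simp
  | y :: z :: s => by
    simp only [List.cons_append, pathWeight_cons_cons] at *
    rw [← List.cons_append, ← List.cons_append, pathWeight_append_cons x t (z :: s), add_assoc]

lemma pathWeight_ofFn : ∀ {k : ℕ} (c : Fin (k + 1) → α),
    pathWeight w (List.ofFn c) = ∑ i : Fin k, w (c i.castSucc) (c i.succ)
  | 0, c => by simp
  | k + 1, c => by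
    rw [List.ofFn_succ, pathWeight_cons_of_head?_eq (y := c 1) (by simp [List.ofFn_succ]),
      pathWeight_ofFn, Fin.sum_univ_succ]
    rfl

lemma List.ofFn_append_zero {k : ℕ} (c : Fin (k + 1) → α) :
    List.ofFn c ++ [c 0] = List.ofFn (Fin.snoc c (c 0) : Fin (k + 2) → α) := by
  rw [List.ofFn_succ' (Fin.snoc c (c 0) : Fin (k + 2) → α)]
  simp only [Fin.snoc_castSucc, Fin.snoc_last, List.concat_eq_append]

lemma Fin.snoc_self_zero_succ {k : ℕ} (c : Fin (k + 1) → α) (i : Fin (k + 1)) :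
    (Fin.snoc c (c 0) : Fin (k + 2) → α) i.succ = c (i + 1) := by
  induction i using Fin.lastCases with
  | last => simp
  | cast i => rw [Fin.succ_castSucc, Fin.snoc_castSucc, Fin.coeSucc_eq_succ]

lemma sum_cyclic_eq_pathWeight {k : ℕ} (c : Fin (k + 1) → α) :
    ∑ i, w (c i) (c (i + 1)) = pathWeight w (List.ofFn c ++ [c 0]) := by
  rw [List.ofFn_append_zero, pathWeight_ofFn]
  simp only [Fin.snoc_castSucc, Fin.snoc_self_zero_succ]

lemma forall_cyclic_of_isChain {R : α → α → Prop} {k : ℕ} {c : Fin (k + 1) → α}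
    (h : (List.ofFn c ++ [c 0]).IsChain R) (i : Fin (k + 1)) : R (c i) (c (i + 1)) := by
  rw [List.ofFn_append_zero, List.isChain_ofFn] at h
  have hi := h i (Nat.succ_lt_succ i.isLt)
  rwa [show (⟨i, _⟩ : Fin (k + 2)) = i.castSucc from rfl,
    show (⟨i + 1, _⟩ : Fin (k + 2)) = i.succ from rfl, Fin.snoc_castSucc,
    Fin.snoc_self_zero_succ] at hi

lemma pathWeight_cycle_nonneg {R : α → α → Prop}
    (hcyc : ∀ (k : ℕ) (c : Fin (k + 1) → α), Function.Injective c →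
      (∀ i, R (c i) (c (i + 1))) → 0 ≤ ∑ i, w (c i) (c (i + 1)))
    {x : α} {l : List α} (hnd : (x :: l).Nodup) (hch : (x :: l ++ [x]).IsChain R) :
    0 ≤ pathWeight w (x :: l ++ [x]) := by
  have hofFn : List.ofFn (x :: l).get = x :: l := List.ofFn_get _
  have := hcyc l.length (x :: l).get (List.nodup_iff_injective_get.mp hnd)
    (forall_cyclic_of_isChain (by rwa [hofFn]))
  rwa [sum_cyclic_eq_pathWeight, hofFn] at this

/-- The witness is `d v`, the least weight of a simple `R`-path starting at `v`. -/
theorem exists_potential_of_forall_cycle_nonneg [Fintype α] (R : α → α → Prop)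
    (hcyc : ∀ (k : ℕ) (c : Fin (k + 1) → α), Function.Injective c →
      (∀ i, R (c i) (c (i + 1))) → 0 ≤ ∑ i, w (c i) (c (i + 1))) :
    ∃ d : α → ℝ, ∀ i j, R i j → d i ≤ w i j + d j := by
  let paths (v : α) : Set (List α) := {l | l.head? = some v ∧ l.Nodup ∧ l.IsChain R}
  have hfin (v : α) : (paths v).Finite :=
    (List.finite_length_le α (Fintype.card α)).subset fun _ hl => hl.2.1.length_le_card
  choose P hP hPmin using fun v => (paths v).exists_min_image (pathWeight w) (hfin v)
    ⟨[v], rfl, List.nodup_singleton v, List.isChain_singleton v⟩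
  refine ⟨fun v => pathWeight w (P v), fun i j hij => ?_⟩
  obtain ⟨hhead, hnd, hch⟩ := hP j
  by_cases hiP : i ∈ P j
  · obtain ⟨s, t, hst⟩ := List.append_of_mem hiP
    rw [hst] at hhead hnd hch
    have hhead' : (s ++ [i]).head? = some j := by cases s <;> simp_all
    have hprefix : s ++ [i] <+: s ++ i :: t := ⟨t, by simp⟩
    have hcycle : 0 ≤ w i j + pathWeight w (s ++ [i]) := by
      rw [← pathWeight_cons_of_head?_eq hhead']
      refine pathWeight_cycle_nonneg hcyc ?_ (List.isChain_cons.mpr ⟨?_, hch.prefix hprefix⟩)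
      · exact (List.nodup_middle.mp hnd).sublist (by simp)
      · simpa [hhead'] using hij
    have hsuffix : pathWeight w (P i) ≤ pathWeight w (i :: t) :=
      hPmin i (i :: t) ⟨rfl, hnd.sublist (List.suffix_append _ _).sublist,
        hch.suffix (List.suffix_append _ _)⟩
    simp only [hst, pathWeight_append_cons i t s]
    linarith
  · calc pathWeight w (P i) ≤ pathWeight w (i :: P j) :=
          hPmin i _ ⟨rfl, List.nodup_cons.mpr ⟨hiP, hnd⟩,
            List.isChain_cons.mpr ⟨by simpa [hhead], hch⟩⟩
      _ = w i j + pathWeight w (P j) := pathWeight_cons_of_head?_eq hhead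

end PathWeight

lemma exists_step_eq_of_forall_exit_or_eq {α : Type*} {W : Set α} {u w : α} (hu : u ∉ W)
    (hw : w ∈ W) {k : ℕ} {c : Fin (k + 1) → α}
    (h : ∀ i, (c i ∈ W ∧ c (i + 1) ∉ W) ∨ (c i = u ∧ c (i + 1) = w)) :
    ∃ i, c i = w ∧ c (i + 1) = u := by
  have hout (i) (hi : c i ∉ W) : c i = u ∧ c (i + 1) = w := (h i).resolve_left fun h' => hi h'.1
  have hin (i) (hi : c i ∈ W) : c (i + 1) ∉ W :=
    (h i).elim And.right fun h' => absurd (h'.1 ▸ hi) hu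
  obtain ⟨j, hj⟩ : ∃ j, c j ∉ W := by
    by_cases h0 : c 0 ∈ W
    · exact ⟨0 + 1, hin 0 h0⟩
    · exact ⟨0, h0⟩
  have hw' : c (j + 1) = w := (hout j hj).2
  exact ⟨j + 1, hw', (hout _ (hin _ (hw' ▸ hw))).1⟩

section Admissible

variable {V : Type*} [DecidableEq V] {G : SimpleGraph V} {a : V → V → ℝ} {O : Finset (V × V)}

def Compatible (G : SimpleGraph V) (O : Finset (V × V)) (i j : V) : Prop :=
  G.Adj i j ∧ (j, i) ∉ O

lemma IsPO.insert {u w : V} (hO : IsPO G O) (huw : G.Adj u w) (hwu : (w, u) ∉ O) :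
    IsPO G (insert (u, w) O) := by
  intro p hp
  rcases Finset.mem_insert.mp hp with rfl | hp
  · simp [huw, hwu, huw.ne]
  · refine ⟨(hO p hp).1, ?_⟩
    simp only [Finset.mem_insert, Prod.ext_iff, not_or]
    exact ⟨fun h => hwu (by rwa [← h.1, ← h.2]), (hO p hp).2⟩

lemma IsAdmissible.exists_pos_mul_le_cycScore [Fintype V] (h : IsAdmissible G a O) :
    ∃ ε > 0, ∀ (k : ℕ) (c : Fin (k + 1) → V), IsPotCycle G O c →
      ((k : ℝ) + 1) * ε ≤ cycScore a O c := by
  let S : Set ℝ := {r | ∃ (k : ℕ) (c : Fin (k + 1) → V), IsPotCycle G O c ∧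
    r = cycScore a O c / ((k : ℝ) + 1)}
  have hS : S.Finite := by
    refine (Set.finite_range fun σ : Σ k : Fin (Fintype.card V), Fin (k + 1) → V =>
      cycScore a O σ.2 / ((σ.1 : ℝ) + 1)).subset ?_
    rintro _ ⟨k, c, hc, rfl⟩
    have hk : k + 1 ≤ Fintype.card V := by simpa using Fintype.card_le_of_injective c hc.2.1
    exact ⟨⟨⟨k, by omega⟩, c⟩, rfl⟩
  obtain ⟨ε, hεS, hεmin⟩ :=
    (insert 1 S).exists_min_image id (hS.insert 1) ⟨1, Set.mem_insert _ _⟩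
  refine ⟨ε, ?_, fun k c hc => ?_⟩
  · rcases hεS with rfl | ⟨k, c, hc, rfl⟩
    · exact one_pos
    · exact div_pos (h k c hc) (by positivity)
  · have := hεmin _ (Set.mem_insert_of_mem _ ⟨k, c, hc, rfl⟩)
    rw [id, id, le_div_iff₀ (by positivity)] at this
    linarith

lemma IsAdmissible.exists_strict_potential [Fintype V] (h : IsAdmissible G a O) :
    ∃ y : V → ℝ, ∀ i j, Compatible G O i j → y i - y j < stepScore a O (i, j) := by
  obtain ⟨ε, hε, hcyc⟩ := h.exists_pos_mul_le_cycScore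
  obtain ⟨y, hy⟩ := exists_potential_of_forall_cycle_nonneg (Compatible G O)
    (w := fun i j => stepScore a O (i, j) - ε) fun k c hc hstep => by
      obtain rfl | hk := Nat.eq_zero_or_pos k
      · exact absurd (hstep 0).1 (by simp)
      · have := hcyc k c ⟨hk, hc, hstep⟩
        rw [cycScore] at this
        simp only [Finset.sum_sub_distrib, Finset.sum_const, Finset.card_univ, Fintype.card_fin,
          nsmul_eq_mul]
        push_cast
        linarith
  exact ⟨y, fun i j hij => by linarith [hy i j hij]⟩

lemma isAdmissible_of_potential (y : V → ℝ)
    (hle : ∀ i j, Compatible G O i j → y i - y j ≤ stepScore a O (i, j))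
    (hlt : ∀ (k : ℕ) (c : Fin (k + 1) → V), IsPotCycle G O c →
      ∃ i, y (c i) - y (c (i + 1)) < stepScore a O (c i, c (i + 1))) :
    IsAdmissible G a O := by
  intro k c hc
  have htelescope : ∑ i, (y (c i) - y (c (i + 1))) = 0 := by
    rw [Finset.sum_sub_distrib, sub_eq_zero]
    exact (Equiv.sum_comp (Equiv.addRight 1) fun i => y (c i)).symm
  obtain ⟨i, hi⟩ := hlt k c hc
  calc 0 = ∑ i, (y (c i) - y (c (i + 1))) := htelescope.symm
    _ < cycScore a O c :=
      Finset.sum_lt_sum (fun i _ => hle _ _ (hc.2.2 i)) ⟨i, Finset.mem_univ _, hi⟩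

def slack (a : V → V → ℝ) (y : V → ℝ) (i j : V) : ℝ := a i j - (y i - y j)

def raiseOn (W : Finset V) (s : ℝ) (y : V → ℝ) (v : V) : ℝ := if v ∈ W then y v + s else y v

variable {y : V → ℝ} {W : Finset V} {u w : V}

lemma raiseOn_sub_le_stepScore
    (hy : ∀ i j, Compatible G O i j → y i - y j < stepScore a O (i, j))
    (hW : ∀ p ∈ O, p.1 ∈ W → p.2 ∈ W) (hu : u ∉ W) (hw : w ∈ W) (hwu : Compatible G O w u)
    (hmin : ∀ i ∈ W, ∀ j ∉ W, Compatible G O i j → slack a y w u ≤ slack a y i j)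
    {i j : V} (hij : Compatible G (insert (u, w) O) i j) :
    raiseOn W (slack a y w u) y i - raiseOn W (slack a y w u) y j
        ≤ stepScore a (insert (u, w) O) (i, j) ∧
      (raiseOn W (slack a y w u) y i - raiseOn W (slack a y w u) y j
          < stepScore a (insert (u, w) O) (i, j) ∨ (i ∈ W ∧ j ∉ W) ∨ (i = u ∧ j = w)) := by
  have hleave {i j : V} (hi : i ∈ W) (hj : j ∉ W) : (i, j) ∉ O := fun h => hj (hW _ h hi)
  have hslack : 0 < slack a y w u := by
    have := hy w u hwu
    rw [stepScore, if_neg (hleave hw hu)] at this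
    rw [slack]
    linarith
  have hij' : Compatible G O i j := ⟨hij.1, fun h => hij.2 (Finset.mem_insert_of_mem h)⟩
  by_cases huw : i = u ∧ j = w
  · obtain ⟨rfl, rfl⟩ := huw
    refine ⟨le_of_eq ?_, Or.inr (Or.inr ⟨rfl, rfl⟩)⟩
    rw [stepScore, if_pos (Finset.mem_insert_self _ _)]
    simp only [raiseOn, slack, if_neg hu, if_pos hw]
    ring
  have hscore : stepScore a (insert (u, w) O) (i, j) = stepScore a O (i, j) := by
    simp only [stepScore, Finset.mem_insert, Prod.ext_iff, huw, false_or]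
  rw [hscore]
  have := hy i j hij'
  by_cases hi : i ∈ W <;> by_cases hj : j ∈ W
  · simp only [raiseOn, hi, hj, if_true, add_sub_add_right_eq_sub]
    exact ⟨this.le, Or.inl this⟩
  · refine ⟨?_, Or.inr (Or.inl ⟨hi, hj⟩)⟩
    have := hmin i hi j hj hij'
    rw [stepScore, if_neg (hleave hi hj)]
    simp only [raiseOn, slack, hi, hj, if_true, if_false] at this ⊢
    linarith
  · simp only [raiseOn, hi, hj, if_true, if_false]
    exact ⟨by linarith, Or.inl (by linarith)⟩
  · simp only [raiseOn, hi, hj, if_false]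
    exact ⟨this.le, Or.inl this⟩

theorem isAdmissible_insert_of_forall_slack_le
    (hy : ∀ i j, Compatible G O i j → y i - y j < stepScore a O (i, j))
    (hW : ∀ p ∈ O, p.1 ∈ W → p.2 ∈ W) (hu : u ∉ W) (hw : w ∈ W) (hwu : Compatible G O w u)
    (hmin : ∀ i ∈ W, ∀ j ∉ W, Compatible G O i j → slack a y w u ≤ slack a y i j) :
    IsAdmissible G a (insert (u, w) O) := by
  have hstep {i j : V} := raiseOn_sub_le_stepScore (i := i) (j := j) hy hW hu hw hwu hmin
  refine isAdmissible_of_potential _ (fun i j hij => (hstep hij).1) fun k c hc => ?_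
  by_contra! htight
  obtain ⟨i, hiw, hiu⟩ := exists_step_eq_of_forall_exit_or_eq (W := (W : Set V)) hu hw
    fun i => ((hstep (hc.2.2 i)).2.resolve_left (htight i).not_gt)
  exact (hc.2.2 i).2 (by rw [hiw, hiu]; exact Finset.mem_insert_self _ _)

end Admissible

theorem extend_admissible_into_general (G : SimpleGraph V) (a : V → V → ℝ) (O : Finset (V × V))
    (hPO : IsPO G O) (hadm : IsAdmissible G a O) (W : Finset V)
    (h1 : ∀ p ∈ O, p.1 ∈ W → p.2 ∈ W)
    (h2 : ∃ u w : V, u ∉ W ∧ w ∈ W ∧ G.Adj u w ∧ (u, w) ∉ O ∧ (w, u) ∉ O) :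
    ∃ u w : V, u ∉ W ∧ w ∈ W ∧ G.Adj u w ∧
      IsPO G (insert (u, w) O) ∧ IsAdmissible G a (insert (u, w) O) := by
  obtain ⟨y, hy⟩ := hadm.exists_strict_potential
  obtain ⟨u₀, w₀, hu₀, hw₀, hadj₀, hblank₀, -⟩ := h2
  let leaving := Finset.univ.filter fun p : V × V => p.1 ∈ W ∧ p.2 ∉ W ∧ Compatible G O p.1 p.2
  obtain ⟨⟨w, u⟩, hwu, hmin⟩ := leaving.exists_min_image (fun p => slack a y p.1 p.2)
    ⟨(w₀, u₀), Finset.mem_filter.mpr ⟨Finset.mem_univ _, hw₀, hu₀, hadj₀.symm, hblank₀⟩⟩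
  simp only [leaving, Finset.mem_filter, Finset.mem_univ, true_and, and_imp, Prod.forall]
    at hwu hmin
  obtain ⟨hw, hu, hcompat⟩ := hwu
  refine ⟨u, w, hu, hw, hcompat.1.symm, hPO.insert hcompat.1.symm fun h => hu (h1 _ h hw), ?_⟩
  exact isAdmissible_insert_of_forall_slack_le hy h1 hu hw hcompat
    fun i hi j hj hij => hmin i j hi hj hij

/-- Topological lemma: if `O` is `a`-admissible, no step of `O` leaves `W`, and some blank
edge joins `Wᶜ` to `W`, then some blank edge from `Wᶜ` to `W` can be oriented into `W`
preserving admissibility. -/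
theorem extend_admissible_into (G : SimpleGraph V) (a : V → V → ℝ) (O : Finset (V × V))
    (hA : HasCentral G a) (hPO : IsPO G O) (hadm : IsAdmissible G a O) (W : Finset V)
    (h1 : ∀ p ∈ O, p.1 ∈ W → p.2 ∈ W)
    (h2 : ∃ u w : V, u ∉ W ∧ w ∈ W ∧ G.Adj u w ∧ (u, w) ∉ O ∧ (w, u) ∉ O) :
    ∃ u w : V, u ∉ W ∧ w ∈ W ∧ G.Adj u w ∧
      IsPO G (insert (u, w) O) ∧ IsAdmissible G a (insert (u, w) O) :=
  extend_admissible_into_general G a O hPO hadm W h1 h2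
end

section
/- Let G be a simple graph and A a parameter list. For every acyclic partial orientation O of G there exists an A-admissible partial orientation O' of G with indeg(O') = indeg(O). -/
open Finset SimpleGraph
open scoped Classical

variable {V : Type*} [Fintype V] [DecidableEq V]

/-!
A point `y : V → ℝ` orients `u → v` when `y v - y u > a v u`. Off the hyperplanes
`y v - y u = a v u` this orientation is admissible: along a potential cycle every score exceeds the
corresponding difference of `y`, and these differences telescope to `0`. So it suffices to find
such a point whose in-degrees are `c = indeg O`.

Since `O` is acyclic there is a point at which every step of `O` is present, so there `c` is at
most the weak in-degrees (ties counted). Between a central point `x` and that point take one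
minimising `∑ v, y v` subject to this; lowering a single `y v` shows that its strict in-degrees
are at most `c`. The tied in-neighbours of `v` have smaller `y - x`, so the ties can be broken
vertex by vertex in increasing order of `y - x` by a small perturbation realising exactly `c`.
-/

set_option linter.unusedSectionVars false

lemma exists_eq_of_map_add_one_le {f : ℕ → ℕ} (hf : ∀ j, f (j + 1) ≤ f j + 1) {k N : ℕ}
    (h0 : f 0 ≤ k) (hN : k ≤ f N) : ∃ j, f j = k := by
  have hex : ∃ j, k ≤ f j := ⟨N, hN⟩
  have hspec := Nat.find_spec hex
  rcases hj : Nat.find hex with _ | j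
  · exact ⟨0, le_antisymm (hj ▸ h0) (hj ▸ hspec)⟩
  · have hmin := Nat.find_min hex (show j < Nat.find hex by omega)
    exact ⟨j + 1, le_antisymm (by linarith [hf j, not_le.1 hmin]) (hj ▸ hspec)⟩

lemma exists_card_filter_lt_eq {ι : Type*} (M : Finset ι) {z : ι → ℕ} (hz : Set.InjOn z M)
    {k : ℕ} (hk : k ≤ #M) : ∃ j, #(M.filter fun u => z u < j) = k := by
  refine exists_eq_of_map_add_one_le (fun j => ?_) (N := M.sup z + 1) (by simp) ?_
  · have hle : #(M.filter fun u => z u = j) ≤ 1 := card_le_one.2 fun u hu w hw =>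
      hz (mem_filter.1 hu).1 (mem_filter.1 hw).1
        ((mem_filter.1 hu).2.trans (mem_filter.1 hw).2.symm)
    calc #(M.filter fun u => z u < j + 1)
        ≤ #((M.filter fun u => z u < j) ∪ M.filter fun u => z u = j) := card_le_card fun u => by
          simp only [mem_filter, mem_union]
          rintro ⟨hu, hlt⟩
          exact (Nat.lt_succ_iff_lt_or_eq.1 hlt).imp (⟨hu, ·⟩) (⟨hu, ·⟩)
      _ ≤ #(M.filter fun u => z u < j) + 1 := (card_union_le _ _).trans (by omega)
  · rwa [filter_true_of_mem fun u hu => Nat.lt_succ_of_le (le_sup hu)]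

lemma exists_injective_card_filter_lt_eq {ι α : Type*} [Fintype ι] [DecidableEq ι] [LinearOrder α]
    (f : ι → α) (N : ι → Finset ι) (hN : ∀ v, ∀ u ∈ N v, f u < f v) (k : ι → ℕ)
    (hk : ∀ v, k v ≤ #(N v)) :
    ∃ z : ι → ℕ, Function.Injective z ∧ ∀ v, #((N v).filter fun u => z u < z v) = k v := by
  suffices h : ∀ s : Finset ι, ∀ k : ι → ℕ, (∀ v ∈ s, k v ≤ #((N v).filter (· ∈ s))) →
      ∃ z : ι → ℕ, Set.InjOn z s ∧ ∀ v ∈ s, #((N v).filter fun u => u ∈ s ∧ z u < z v) = k v by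
    obtain ⟨z, hinj, hz⟩ := h univ k (by simpa using hk)
    exact ⟨z, by simpa using hinj, fun v => by simpa using hz v (mem_univ v)⟩
  intro s
  induction s using Finset.induction_on_max_value f with
  | empty => exact fun k _ => ⟨0, by simp, by simp⟩
  | insert a s ha hmax ih =>
    intro k hk
    have hne : ∀ v ∈ insert a s, ∀ u ∈ N v, u ≠ a := by
      intro v hv u hu hua
      rw [hua] at hu
      rcases mem_insert.1 hv with hva | hv
      · exact (hN v a hu).ne (hva ▸ rfl)
      · exact (hN v a hu).not_ge (hmax v hv)
    have hmem : ∀ v ∈ insert a s, ∀ u ∈ N v, (u ∈ insert a s ↔ u ∈ s) := fun v hv u hu => by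
      simp [hne v hv u hu]
    have hk' : ∀ v ∈ insert a s, k v ≤ #((N v).filter (· ∈ s)) := fun v hv => by
      rw [← filter_congr (hmem v hv)]
      exact hk v hv
    obtain ⟨z, hinj, hz⟩ := ih k fun v hv => hk' v (mem_insert_of_mem hv)
    obtain ⟨j, hj⟩ := exists_card_filter_lt_eq ((N a).filter (· ∈ s))
      (hinj.mono fun u hu => (mem_filter.1 hu).2) (hk' a (mem_insert_self a s))
    -- the old values become even and `a` is slotted in between them at an odd value
    refine ⟨fun u => if u = a then 2 * j + 1 else 2 * z u + 2, ?_, fun v hv => ?_⟩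
    · intro u hu w hw h
      simp only at h
      split_ifs at h with hua hwa hwa
      · exact hua.trans hwa.symm
      · omega
      · omega
      · exact hinj ((mem_insert.1 hu).resolve_left hua) ((mem_insert.1 hw).resolve_left hwa)
          (by omega)
    · rcases mem_insert.1 hv with rfl | hvs
      · rw [← hj, filter_filter]
        refine congrArg card (filter_congr fun u hu => ?_)
        simp only [if_neg (hne v hv u hu), hmem v hv u hu, ↓reduceIte]
        exact and_congr_right fun _ => by omega
      · have hva : v ≠ a := fun h => ha (h ▸ hvs)
        rw [← hz v hvs]
        refine congrArg card (filter_congr fun u hu => ?_)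
        simp only [if_neg (hne v hv u hu), if_neg hva, hmem v hv u hu]
        exact and_congr_right fun _ => by omega

namespace Bigraphical

open Topology

section Orientation

variable {G : SimpleGraph V} {a : V → V → ℝ}

noncomputable def inNbrs (G : SimpleGraph V) (a : V → V → ℝ) (y : V → ℝ) (v : V) : Finset V :=
  univ.filter fun u => G.Adj u v ∧ a v u < y v - y u

noncomputable def weakInNbrs (G : SimpleGraph V) (a : V → V → ℝ) (y : V → ℝ) (v : V) : Finset V :=
  univ.filter fun u => G.Adj u v ∧ a v u ≤ y v - y u

/-- The orientation of the region of the bigraphical arrangement containing `y`. -/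
noncomputable def orientationAt (G : SimpleGraph V) (a : V → V → ℝ) (y : V → ℝ) : Finset (V × V) :=
  univ.filter fun p => G.Adj p.1 p.2 ∧ a p.2 p.1 < y p.2 - y p.1

lemma mem_orientationAt {y : V → ℝ} {u v : V} :
    (u, v) ∈ orientationAt G a y ↔ G.Adj u v ∧ a v u < y v - y u := by
  simp [orientationAt]

lemma indeg_eq_card_filter (O : Finset (V × V)) (v : V) :
    indeg O v = #(univ.filter fun u => (u, v) ∈ O) := by
  refine card_nbij' Prod.fst (fun u => (u, v)) ?_ ?_ ?_ ?_
  · rintro ⟨u, w⟩ h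
    obtain ⟨h, rfl⟩ := mem_filter.1 h
    simpa using h
  · intro u hu
    simpa using hu
  · rintro ⟨u, w⟩ h
    obtain ⟨-, rfl⟩ := mem_filter.1 h
    rfl
  · intro u _
    rfl

lemma indeg_orientationAt (y : V → ℝ) (v : V) :
    indeg (orientationAt G a y) v = #(inNbrs G a y v) := by
  simp [indeg_eq_card_filter, mem_orientationAt, inNbrs]

lemma orientationAt_isPO {x : V → ℝ} (hx : ∀ u v, G.Adj u v → x u - x v < a u v) (y : V → ℝ) :
    IsPO G (orientationAt G a y) := by
  rintro ⟨u, v⟩ h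
  rw [mem_orientationAt] at h
  refine ⟨h.1, fun h' => ?_⟩
  rw [mem_orientationAt] at h'
  linarith [hx u v h.1, hx v u h.1.symm, h.2, h'.2]

lemma sum_sub_succ_eq_zero {k : ℕ} (g : Fin (k + 1) → ℝ) : ∑ i, (g i - g (i + 1)) = 0 := by
  rw [sum_sub_distrib, sub_eq_zero]
  exact (Equiv.sum_comp (Equiv.addRight 1) g).symm

lemma isAdmissible_orientationAt {y : V → ℝ} (hgen : ∀ u v, G.Adj u v → y v - y u ≠ a v u) :
    IsAdmissible G a (orientationAt G a y) := by
  intro k c hc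
  have hstep : ∀ i,
      y (c i) - y (c (i + 1)) < stepScore a (orientationAt G a y) (c i, c (i + 1)) := by
    intro i
    obtain ⟨hadj, hrev⟩ := hc.2.2 i
    rw [mem_orientationAt, not_and, not_lt] at hrev
    simp only [stepScore, mem_orientationAt]
    split_ifs with h
    · linarith [h.2]
    · exact (hrev hadj.symm).lt_of_ne (hgen _ _ hadj.symm)
  calc 0 = ∑ i, (y (c i) - y (c (i + 1))) := (sum_sub_succ_eq_zero fun i => y (c i)).symm
    _ < cycScore a (orientationAt G a y) c :=
      sum_lt_sum_of_nonempty univ_nonempty fun i _ => hstep i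

end Orientation

section Acyclic

variable {O : Finset (V × V)}

lemma hasDirCycle_of_forall_exists_pred (hloop : ∀ v, (v, v) ∉ O) {W : Finset V}
    (hW : W.Nonempty) (hpred : ∀ i ∈ W, ∃ u ∈ W, (u, i) ∈ O) : HasDirCycle O := by
  have hpred' : ∀ i : W, ∃ u : W, ((u : V), (i : V)) ∈ O := fun i => by
    obtain ⟨u, hu, h⟩ := hpred i i.2
    exact ⟨⟨u, hu⟩, h⟩
  choose g hg using hpred'
  obtain ⟨z₀, hz₀⟩ := hW
  obtain ⟨m, n, hmn, hmeq⟩ := Finite.exists_ne_map_eq_of_infinite fun n => g^[n] ⟨z₀, hz₀⟩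
  set z := g^[min m n] ⟨z₀, hz₀⟩
  have hper : Function.IsPeriodicPt g (max m n - min m n) z := by
    rcases le_total m n with h | h
    all_goals simp only [Function.IsPeriodicPt, Function.IsFixedPt, z, ← Function.iterate_add_apply]
    · rw [min_eq_left h, max_eq_right h, Nat.sub_add_cancel h, hmeq]
    · rw [min_eq_right h, max_eq_left h, Nat.sub_add_cancel h, hmeq]
  have hpos := hper.minimalPeriod_pos (by omega)
  obtain ⟨k, hk⟩ : ∃ k, Function.minimalPeriod g z = k + 1 + 1 := by
    refine ⟨Function.minimalPeriod g z - 2, ?_⟩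
    have : Function.minimalPeriod g z ≠ 1 := fun h1 => hloop z <| by
      simpa [(Function.minimalPeriod_eq_one_iff_isFixedPt.1 h1).eq] using hg z
    omega
  -- `g` picks predecessors, so its orbit through `z` is a cycle of `O` traversed backwards
  set d : Fin (k + 1 + 1) → V := fun i => (g^[i.val] z).1
  have hd_inj : Function.Injective d := fun i j hij => Fin.ext <|
    Function.iterate_injOn_Iio_minimalPeriod (by rw [Set.mem_Iio, hk]; exact i.2)
      (by rw [Set.mem_Iio, hk]; exact j.2) (Subtype.ext hij)
  have hd_step : ∀ i, (d (i + 1), d i) ∈ O := by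
    intro i
    simp only [d, Fin.val_add, Fin.val_one, ← hk, Function.iterate_mod_minimalPeriod_eq,
      Function.iterate_succ_apply']
    exact hg _
  refine ⟨k + 1, fun i => d (-i), by omega, hd_inj.comp neg_injective, fun i => ?_⟩
  convert hd_step (-i - 1) using 3 <;> abel

lemma exists_source_of_not_hasDirCycle (hloop : ∀ v, (v, v) ∉ O) (hacyc : ¬ HasDirCycle O)
    {W : Finset V} (hW : W.Nonempty) : ∃ i ∈ W, ∀ u ∈ W, (u, i) ∉ O := by
  by_contra! h
  exact hacyc (hasDirCycle_of_forall_exists_pred hloop hW h)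

lemma exists_potential_of_not_hasDirCycle (hloop : ∀ v, (v, v) ∉ O) (hacyc : ¬ HasDirCycle O)
    (w : V → V → ℝ) : ∃ y : V → ℝ, ∀ u v, (u, v) ∈ O → w u v < y v - y u := by
  suffices ∀ S : Finset V, ∃ y : V → ℝ, ∀ u ∈ S, ∀ v ∈ S, (u, v) ∈ O → w u v < y v - y u by
    obtain ⟨y, hy⟩ := this univ
    exact ⟨y, fun u v => hy u (mem_univ u) v (mem_univ v)⟩
  intro S
  induction S using Finset.strongInduction with
  | H S ih =>
    rcases S.eq_empty_or_nonempty with rfl | hS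
    · exact ⟨0, by simp⟩
    obtain ⟨s, hs, hsrc⟩ := exists_source_of_not_hasDirCycle hloop hacyc hS
    obtain ⟨y, hy⟩ := ih (S.erase s) (erase_ssubset hs)
    obtain ⟨m, hm⟩ := (Set.finite_range fun v => y v - w s v).bddBelow
    refine ⟨Function.update y s (m - 1), fun u hu v hv huv => ?_⟩
    have hvs : v ≠ s := by
      rintro rfl
      exact hsrc u hu huv
    rw [Function.update_of_ne hvs]
    by_cases hus : u = s
    · subst hus
      have := hm ⟨v, rfl⟩
      simp only [Function.update_self]
      linarith
    · rw [Function.update_of_ne hus]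
      exact hy u (mem_erase.2 ⟨hus, hu⟩) v (mem_erase.2 ⟨hvs, hv⟩) huv

end Acyclic

section Minimal

variable {G : SimpleGraph V} {a : V → V → ℝ}

lemma inNbrs_subset_weakInNbrs (y : V → ℝ) (v : V) : inNbrs G a y v ⊆ weakInNbrs G a y v :=
  monotone_filter_right _ fun _ _ h => ⟨h.1, h.2.le⟩

lemma weakInNbrs_add_const (y : V → ℝ) (C : ℝ) (v : V) :
    weakInNbrs G a (fun w => y w + C) v = weakInNbrs G a y v := by
  simp [weakInNbrs]

lemma weakInNbrs_subset_of_le {y y' : V → ℝ} {v : V} (hv : y v ≤ y' v)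
    (hle : ∀ u, u ≠ v → y' u ≤ y u) : weakInNbrs G a y v ⊆ weakInNbrs G a y' v := by
  intro u hu
  simp only [weakInNbrs, mem_filter, mem_univ, true_and] at hu ⊢
  exact ⟨hu.1, by linarith [hle u hu.1.ne, hu.2]⟩

lemma isClosed_setOf_le_card_weakInNbrs (n : ℕ) (v : V) :
    IsClosed {y : V → ℝ | n ≤ #(weakInNbrs G a y v)} := by
  have hset : {y : V → ℝ | n ≤ #(weakInNbrs G a y v)} =
      ⋃ t : Finset V, ⋃ (_ : #t = n ∧ ∀ u ∈ t, G.Adj u v), ⋂ u ∈ t, {y | a v u ≤ y v - y u} := by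
    ext y
    simp only [Set.mem_ofPred_eq, le_card_iff_exists_subset_card, Set.mem_iUnion, Set.mem_iInter,
      exists_prop, weakInNbrs, subset_iff, mem_filter, mem_univ, true_and]
    constructor
    · rintro ⟨t, ht, rfl⟩
      exact ⟨t, ⟨rfl, fun u hu => (ht hu).1⟩, fun u hu => (ht hu).2⟩
    · rintro ⟨t, ⟨rfl, hadj⟩, hle⟩
      exact ⟨t, fun u hu => ⟨hadj u hu, hle u hu⟩, rfl⟩
  rw [hset]
  exact isClosed_iUnion_of_finite fun t => isClosed_iUnion_of_finite fun _ =>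
    isClosed_biInter fun u _ => isClosed_le continuous_const (by fun_prop)

lemma exists_lt_inNbrs_subset_weakInNbrs_update {y : V → ℝ} {v : V} {b : ℝ} (hb : b < y v) :
    ∃ t, b < t ∧ t < y v ∧ inNbrs G a y v ⊆ weakInNbrs G a (Function.update y v t) v := by
  have hev : ∀ᶠ t in 𝓝[<] y v, b < t ∧ ∀ u ∈ inNbrs G a y v, a v u + y u < t := by
    refine Filter.Eventually.filter_mono nhdsWithin_le_nhds ((eventually_gt_nhds hb).and ?_)
    refine (Filter.eventually_all_finset _).2 fun u hu => eventually_gt_nhds ?_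
    simp only [inNbrs, mem_filter, mem_univ, true_and] at hu
    linarith [hu.2]
  obtain ⟨t, ⟨hxt, ht⟩, hty⟩ := (hev.and self_mem_nhdsWithin).exists
  refine ⟨t, hxt, hty, fun u hu => ?_⟩
  have hadj := (mem_filter.1 hu).2.1
  simp only [weakInNbrs, mem_filter, mem_univ, true_and, Function.update_self,
    Function.update_of_ne hadj.ne]
  exact ⟨hadj, by linarith [ht u hu]⟩

lemma exists_card_inNbrs_le_le_card_weakInNbrs {x : V → ℝ}
    (hx : ∀ u v, G.Adj u v → x u - x v < a u v) (c : V → ℕ) {y₀ : V → ℝ}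
    (hy₀ : ∀ v, c v ≤ #(weakInNbrs G a y₀ v)) :
    ∃ y, ∀ v, #(inNbrs G a y v) ≤ c v ∧ c v ≤ #(weakInNbrs G a y v) := by
  obtain ⟨C, hC⟩ := (Set.finite_range fun v => x v - y₀ v).bddAbove
  set K := Set.Icc x (fun v => y₀ v + C) ∩ {y | ∀ v, c v ≤ #(weakInNbrs G a y v)}
  have hK : IsCompact K := isCompact_Icc.inter_right <| by
    simpa only [Set.ofPred_forall] using
      isClosed_iInter fun v => isClosed_setOf_le_card_weakInNbrs _ v
  have hy₁ : (fun v => y₀ v + C) ∈ K :=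
    ⟨⟨fun v => by linarith [hC ⟨v, rfl⟩], le_rfl⟩,
      fun v => by rw [weakInNbrs_add_const]; exact hy₀ v⟩
  obtain ⟨y, hyK, hmin⟩ := hK.exists_isMinOn ⟨_, hy₁⟩ (f := fun y => ∑ v, y v) (by fun_prop)
  refine ⟨y, fun v => ⟨not_lt.1 fun hlt => ?_, hyK.2 v⟩⟩
  -- otherwise lowering `y v` a little stays in `K` and decreases the sum
  obtain ⟨u, hu⟩ := card_pos.1 (hlt.trans_le' (Nat.zero_le _))
  have hxv : x v < y v := by
    simp only [inNbrs, mem_filter, mem_univ, true_and] at hu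
    linarith [hx v u hu.1.symm, hyK.1.1 u, hu.2]
  obtain ⟨t, hxt, hty, hsub⟩ := exists_lt_inNbrs_subset_weakInNbrs_update (G := G) (a := a) hxv
  have hlow : ∀ w, Function.update y v t w ≤ y w := by
    intro w
    rcases eq_or_ne w v with rfl | hw
    · simpa using hty.le
    · simp [Function.update_of_ne hw]
  have hK' : Function.update y v t ∈ K := by
    refine ⟨⟨fun w => ?_, fun w => (hlow w).trans (hyK.1.2 w)⟩, fun w => ?_⟩
    · rcases eq_or_ne w v with rfl | hw
      · simpa using hxt.le
      · simpa [Function.update_of_ne hw] using hyK.1.1 w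
    · rcases eq_or_ne w v with rfl | hw
      · exact hlt.le.trans (card_le_card hsub)
      · refine (hyK.2 w).trans (card_le_card (weakInNbrs_subset_of_le ?_ fun u _ => hlow u))
        simp [Function.update_of_ne hw]
  have hsum : ∑ w, Function.update y v t w < ∑ w, y w :=
    sum_lt_sum (fun w _ => hlow w) ⟨v, mem_univ v, by simpa using hty⟩
  exact (isMinOn_iff.1 hmin _ hK').not_gt hsum

end Minimal

section Perturb

variable {G : SimpleGraph V} {a : V → V → ℝ}

lemma eventually_add_mul_preserves_lt (y d : V → ℝ) (b : V → V → ℝ) :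
    ∀ᶠ ε in 𝓝 (0 : ℝ), ∀ u v,
      (b u v < y v - y u → b u v < (y v + ε * d v) - (y u + ε * d u)) ∧
      (y v - y u < b u v → (y v + ε * d v) - (y u + ε * d u) < b u v) := by
  simp only [Filter.eventually_all]
  intro u v
  have ht : Filter.Tendsto (fun ε : ℝ => (y v + ε * d v) - (y u + ε * d u)) (𝓝 0)
      (𝓝 (y v - y u)) := by
    have hc : Continuous fun ε : ℝ => (y v + ε * d v) - (y u + ε * d u) := by fun_prop
    simpa using hc.tendsto 0
  refine Filter.Eventually.and ?_ ?_
  · by_cases h : b u v < y v - y u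
    · exact (ht.eventually_const_lt h).mono fun _ h' _ => h'
    · exact Filter.Eventually.of_forall fun _ h' => absurd h' h
  · by_cases h : y v - y u < b u v
    · exact (ht.eventually_lt_const h).mono fun _ h' _ => h'
    · exact Filter.Eventually.of_forall fun _ h' => absurd h' h

lemma lt_add_mul_sub_iff {y d : V → ℝ} {b ε : ℝ} {u v : V} (hε : 0 < ε)
    (hlt : b < y v - y u → b < (y v + ε * d v) - (y u + ε * d u))
    (hgt : y v - y u < b → (y v + ε * d v) - (y u + ε * d u) < b) :
    b < (y v + ε * d v) - (y u + ε * d u) ↔ b < y v - y u ∨ (y v - y u = b ∧ d u < d v) := by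
  rcases lt_trichotomy b (y v - y u) with h | h | h
  · simp [h, hlt h]
  · have : (y v + ε * d v) - (y u + ε * d u) = b + ε * (d v - d u) := by rw [h]; ring
    rw [this, lt_add_iff_pos_right, mul_pos_iff_of_pos_left hε, sub_pos]
    simp [h]
  · simp [lt_asymm h, h.ne, lt_asymm (hgt h)]

lemma add_mul_sub_ne {y d : V → ℝ} {b ε : ℝ} {u v : V} (hε : ε ≠ 0) (hd : d u ≠ d v)
    (hlt : b < y v - y u → b < (y v + ε * d v) - (y u + ε * d u))
    (hgt : y v - y u < b → (y v + ε * d v) - (y u + ε * d u) < b) :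
    (y v + ε * d v) - (y u + ε * d u) ≠ b := by
  rcases lt_trichotomy b (y v - y u) with h | h | h
  · exact (hlt h).ne'
  · have : (y v + ε * d v) - (y u + ε * d u) = b + ε * (d v - d u) := by rw [h]; ring
    simpa [this, hε, sub_eq_zero] using hd.symm
  · exact (hgt h).ne

lemma mem_weakInNbrs_sdiff_inNbrs {y : V → ℝ} {u v : V} :
    u ∈ weakInNbrs G a y v \ inNbrs G a y v ↔ G.Adj u v ∧ y v - y u = a v u := by
  simp only [mem_sdiff, weakInNbrs, inNbrs, mem_filter, mem_univ, true_and, not_and, not_lt]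
  exact ⟨fun ⟨⟨h, h₁⟩, h₂⟩ => ⟨h, le_antisymm (h₂ h) h₁⟩,
    fun ⟨h, h₁⟩ => ⟨⟨h, h₁.ge⟩, fun _ => h₁.le⟩⟩

lemma exists_generic_card_inNbrs_eq {x y : V → ℝ} (hx : ∀ u v, G.Adj u v → x u - x v < a u v)
    {c : V → ℕ} (hc : ∀ v, #(inNbrs G a y v) ≤ c v ∧ c v ≤ #(weakInNbrs G a y v)) :
    ∃ y' : V → ℝ, (∀ u v, G.Adj u v → y' v - y' u ≠ a v u) ∧ ∀ v, #(inNbrs G a y' v) = c v := by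
  set T := fun v => weakInNbrs G a y v \ inNbrs G a y v
  obtain ⟨z, hzinj, hz⟩ := exists_injective_card_filter_lt_eq (fun v => y v - x v) T
    (fun v u hu => by
      obtain ⟨hadj, heq⟩ := mem_weakInNbrs_sdiff_inNbrs.1 hu
      linarith [hx v u hadj.symm])
    (fun v => c v - #(inNbrs G a y v)) fun v => by
      rw [card_sdiff_of_subset (inNbrs_subset_weakInNbrs y v)]
      have := hc v
      omega
  obtain ⟨ε, hε, hεpos⟩ := ((eventually_add_mul_preserves_lt y (fun v => (z v : ℝ)) fun u v => a v u
    ).filter_mono nhdsWithin_le_nhds |>.and (self_mem_nhdsWithin (s := Set.Ioi 0))).exists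
  refine ⟨fun v => y v + ε * z v, fun u v hadj => add_mul_sub_ne (y := y) (d := fun v => (z v : ℝ))
    hεpos.ne' (Nat.cast_injective.ne (hzinj.ne hadj.ne)) (hε u v).1 (hε u v).2, fun v => ?_⟩
  have hunion : inNbrs G a (fun v => y v + ε * z v) v =
      inNbrs G a y v ∪ (T v).filter fun u => z u < z v := by
    ext u
    simp only [T, mem_union, mem_filter, mem_weakInNbrs_sdiff_inNbrs]
    simp only [inNbrs, mem_filter, mem_univ, true_and,
      lt_add_mul_sub_iff (y := y) (d := fun v => (z v : ℝ)) hεpos (hε u v).1 (hε u v).2,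
      Nat.cast_lt]
    tauto
  rw [hunion, card_union_of_disjoint (disjoint_sdiff.mono_right (filter_subset _ _)), hz v]
  have := hc v
  omega

end Perturb

end Bigraphical

open Bigraphical

/-- For every acyclic partial orientation `O` of `G` there is an `a`-admissible partial
orientation with the same indegree sequence. -/
theorem exists_admissible_same_indeg (G : SimpleGraph V) (a : V → V → ℝ)
    (hA : HasCentral G a) (O : Finset (V × V)) (hO : IsAcyclicPO G O) :
    ∃ O' : Finset (V × V), IsPO G O' ∧ IsAdmissible G a O' ∧
      ∀ v : V, indeg O' v = indeg O v := by
  obtain ⟨x, hx⟩ := hA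
  obtain ⟨y₀, hy₀⟩ := exists_potential_of_not_hasDirCycle (fun v h => G.irrefl (hO.1 _ h).1) hO.2
    fun u v => a v u
  have hindeg : ∀ v, indeg O v ≤ #(weakInNbrs G a y₀ v) := fun v => by
    rw [indeg_eq_card_filter]
    refine card_le_card fun u hu => ?_
    have huv := (mem_filter.1 hu).2
    simp only [weakInNbrs, mem_filter, mem_univ, true_and]
    exact ⟨(hO.1 _ huv).1, (hy₀ u v huv).le⟩
  obtain ⟨y, hy⟩ := exists_card_inNbrs_le_le_card_weakInNbrs hx (indeg O) hindeg
  obtain ⟨y', hgen, hcard⟩ := exists_generic_card_inNbrs_eq hx hy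
  exact ⟨orientationAt G a y', orientationAt_isPO hx y', isAdmissible_orientationAt hgen,
    fun v => by rw [indeg_orientationAt, hcard]⟩
end

section
/- For the cycle graph C_n with n odd, there are no almost-SEMI-admissible partial orientations; for n even, there are exactly 2·binom(n, n/2) almost-SEMI-admissible partial orientations, namely those obtained by choosing exactly half of the edges and orienting them all consistently in one of the two rotational directions around the cycle, leaving the rest blank. -/
open Finset SimpleGraph
open scoped Classical

variable {V : Type*} [Fintype V] [DecidableEq V]

/-!
A potential cycle of `C_n` is either a back-and-forth walk along a blank edge, of score `2`, or one
of the two Hamiltonian rotations `v ↦ v + d`, `d = ±1`. The rotation in direction `d` is a potential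
cycle exactly when no edge is oriented against `d`, and its score is then `n - 2k`, where `k` is the
number of edges oriented along `d`. So the minimum score is `0` exactly when all oriented edges
point the same way around the cycle and there are `n / 2` of them.
-/

open Function Fin.CommRing

namespace Fin

variable {m : ℕ} [NeZero m]

lemma one_add_one_ne_zero (hm : 3 ≤ m) : (1 : Fin m) + 1 ≠ 0 := by
  rw [one_add_one_eq_two, ← Nat.cast_ofNat, Ne, natCast_eq_zero]
  exact fun h => by have := Nat.le_of_dvd two_pos h; omega

lemma add_self_ne_zero_of_eq_one_or_eq_neg_one (hm : 3 ≤ m) {d : Fin m} (hd : d = 1 ∨ d = -1) :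
    d + d ≠ 0 := by
  rcases hd with rfl | rfl
  · exact one_add_one_ne_zero hm
  · rw [← neg_add, neg_ne_zero]
    exact one_add_one_ne_zero hm

lemma apply_eq_apply_zero_add_nsmul {A : Type*} [AddMonoid A] {f : Fin m → A} {d : A}
    (h : ∀ i, f (i + 1) = f i + d) (i : Fin m) : f i = f 0 + i.val • d := by
  have key (j : ℕ) : f j = f 0 + j • d := by
    induction j with
    | zero => simp
    | succ j ih => rw [Nat.cast_succ, h, ih, succ_nsmul, add_assoc]
  simpa using key i.val

end Fin

lemma IsPotCycle.cycScore_eq_two {α : Type*} [DecidableEq α] {G : SimpleGraph α}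
    {O : Finset (α × α)} {c : Fin (1 + 1) → α} (hc : IsPotCycle G O c) :
    cycScore (fun _ _ => (1 : ℝ)) O c = 2 := by
  have h0 := (hc.2.2 0).2
  have h1 := (hc.2.2 1).2
  simp only [Fin.isValue, zero_add, Fin.reduceAdd] at h0 h1
  simp [cycScore, stepScore, h0, h1, one_add_one_eq_two]

section CycleGraph

variable {n : ℕ}

def rotationSteps (d : Fin n) : Finset (Fin n × Fin n) := univ.image fun v => (v, v + d)

@[simp]
lemma mem_rotationSteps {d : Fin n} {p : Fin n × Fin n} : p ∈ rotationSteps d ↔ p.2 = p.1 + d := by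
  simp [rotationSteps, Prod.ext_iff, eq_comm]

lemma card_rotationSteps (d : Fin n) : #(rotationSteps d) = n := by
  rw [rotationSteps, card_image_of_injective _ fun _ _ h => congrArg Prod.fst h, card_univ,
    Fintype.card_fin]

lemma cycScore_eq_of_add_step {O : Finset (Fin n × Fin n)} {k : ℕ} {c : Fin (k + 1) → Fin n}
    {d : Fin n} (hbij : Bijective c) (hstep : ∀ i, c (i + 1) = c i + d) :
    cycScore (fun _ _ => (1 : ℝ)) O c = n - 2 * #(O ∩ rotationSteps d) := by
  calc cycScore (fun _ _ => (1 : ℝ)) O c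
      = ∑ v, stepScore (fun _ _ => (1 : ℝ)) O (v, v + d) := by
        simp only [cycScore, hstep]
        exact Fintype.sum_bijective c hbij _ _ fun _ => rfl
    _ = ∑ p ∈ rotationSteps d, stepScore (fun _ _ => (1 : ℝ)) O p :=
        (sum_image fun _ _ _ _ h => congrArg Prod.fst h).symm
    _ = ∑ p ∈ rotationSteps d, (1 - 2 * if p ∈ O then (1 : ℝ) else 0) :=
        sum_congr rfl fun p _ => by unfold stepScore; split_ifs <;> norm_num
    _ = n - 2 * #(O ∩ rotationSteps d) := by
        rw [sum_sub_distrib, ← mul_sum, sum_boole, sum_const, card_rotationSteps,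
          filter_mem_eq_inter, inter_comm, nsmul_one]

variable [NeZero n]

lemma cycleGraph_adj_iff_exists_add (hn : 2 ≤ n) {u v : Fin n} :
    (cycleGraph n).Adj u v ↔ ∃ d, (d = 1 ∨ d = -1) ∧ v = u + d := by
  obtain ⟨m, rfl⟩ : ∃ m, n = m + 2 := ⟨n - 2, by omega⟩
  rw [cycleGraph_adj]
  constructor
  · rintro (h | h)
    · exact ⟨-1, Or.inr rfl, by rw [← h]; ring⟩
    · exact ⟨1, Or.inl rfl, by rw [← h]; ring⟩
  · rintro ⟨d, rfl | rfl, rfl⟩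
    · exact Or.inr (by ring)
    · exact Or.inl (by ring)

lemma exists_add_step_of_injective (hn : 2 ≤ n) {k : ℕ} (hk : 2 ≤ k) {c : Fin (k + 1) → Fin n}
    (hinj : Injective c) (hadj : ∀ i, (cycleGraph n).Adj (c i) (c (i + 1))) :
    ∃ d, (d = 1 ∨ d = -1) ∧ ∀ i, c (i + 1) = c i + d := by
  set δ : Fin (k + 1) → Fin n := fun i => c (i + 1) - c i
  have hc (i) : c (i + 1) = c i + δ i := (add_sub_cancel _ _).symm
  have hδ (i) : δ i = 1 ∨ δ i = -1 := by
    obtain ⟨d, hd, h⟩ := (cycleGraph_adj_iff_exists_add hn).1 (hadj i)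
    simpa [δ, h] using hd
  -- a turn `δ (i + 1) = -δ i` would make `c` revisit `c i` two steps later
  have hδ_const (i) : δ (i + 1) = δ i + 0 := by
    by_contra hne
    have hsum : δ i + δ (i + 1) = 0 := by
      rcases hδ i with h1 | h1 <;> rcases hδ (i + 1) with h2 | h2 <;>
        simp_all
    have hback : c (i + 1 + 1) = c i := by rw [hc, hc, add_assoc, hsum, add_zero]
    exact Fin.one_add_one_ne_zero (m := k + 1) (by omega) (by simpa [add_assoc] using hinj hback)
  have hδ_eq (i) : δ i = δ 0 := by simpa using Fin.apply_eq_apply_zero_add_nsmul hδ_const i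
  exact ⟨δ 0, hδ 0, fun i => by rw [hc, hδ_eq]⟩

lemma bijective_of_add_step {k : ℕ} {c : Fin (k + 1) → Fin n} {d : Fin n}
    (hd : d = 1 ∨ d = -1) (hinj : Injective c) (hstep : ∀ i, c (i + 1) = c i + d) :
    Bijective c := by
  have hzero : (k + 1) • d = 0 := by
    have h := hstep (Fin.last k)
    rw [Fin.last_add_one, Fin.apply_eq_apply_zero_add_nsmul hstep (Fin.last k), Fin.val_last,
      add_assoc, ← succ_nsmul] at h
    exact add_eq_left.mp h.symm
  have hdvd : n ∣ k + 1 := by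
    rw [← Fin.natCast_eq_zero]
    rcases hd with rfl | rfl
    · simpa using hzero
    · simpa using neg_eq_zero.mp ((smul_neg _ _).symm.trans hzero)
  have hle : k + 1 ≤ n := by simpa using Fintype.card_le_of_injective c hinj
  refine (Fintype.bijective_iff_injective_and_card c).2 ⟨hinj, ?_⟩
  simpa using le_antisymm hle (Nat.le_of_dvd k.succ_pos hdvd)

lemma mk_add_notMem_rotationSteps (hn : 3 ≤ n) {d : Fin n} (hd : d = 1 ∨ d = -1) (v : Fin n) :
    (v + d, v) ∉ rotationSteps d := by
  rw [mem_rotationSteps, eq_comm, add_assoc, add_eq_left]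
  exact Fin.add_self_ne_zero_of_eq_one_or_eq_neg_one hn hd

lemma disjoint_rotationSteps_one_neg_one (hn : 3 ≤ n) :
    Disjoint (rotationSteps (1 : Fin n)) (rotationSteps (-1)) := by
  refine disjoint_left.2 fun p h1 h2 => Fin.one_add_one_ne_zero hn ?_
  rw [mem_rotationSteps] at h1 h2
  exact add_eq_zero_iff_eq_neg.2 (add_left_cancel (h1.symm.trans h2))

lemma exists_subset_rotationSteps_iff {O : Finset (Fin n × Fin n)} :
    (∃ d : Fin n, (d = 1 ∨ d = -1) ∧ O ⊆ rotationSteps d) ↔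
      (∀ p ∈ O, p.2 = p.1 + 1) ∨ (∀ p ∈ O, p.1 = p.2 + 1) := by
  simp only [subset_iff, mem_rotationSteps]
  constructor
  · rintro ⟨d, rfl | rfl, h⟩
    · exact Or.inl h
    · exact Or.inr fun p hp => (eq_add_neg_iff_add_eq.1 (h hp)).symm
  · rintro (h | h)
    · exact ⟨1, Or.inl rfl, fun p hp => h p hp⟩
    · exact ⟨-1, Or.inr rfl, fun p hp => eq_add_neg_iff_add_eq.2 (h p hp).symm⟩

lemma IsPotCycle.eq_one_or_exists_add_step (hn : 2 ≤ n) {O : Finset (Fin n × Fin n)} {k : ℕ}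
    {c : Fin (k + 1) → Fin n} (hc : IsPotCycle (cycleGraph n) O c) :
    k = 1 ∨ ∃ d, (d = 1 ∨ d = -1) ∧ Bijective c ∧ ∀ i, c (i + 1) = c i + d := by
  obtain ⟨hk, hinj, hstep⟩ := hc
  rcases (by omega : k = 1 ∨ 2 ≤ k) with rfl | hk2
  · exact Or.inl rfl
  obtain ⟨d, hd, hcd⟩ := exists_add_step_of_injective hn hk2 hinj fun i => (hstep i).1
  exact Or.inr ⟨d, hd, bijective_of_add_step hd hinj hcd, hcd⟩

lemma IsPotCycle.cycScore_eq_two_or_eq_rotation (hn : 2 ≤ n) {O : Finset (Fin n × Fin n)}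
    {k : ℕ} {c : Fin (k + 1) → Fin n} (hc : IsPotCycle (cycleGraph n) O c) :
    cycScore (fun _ _ => (1 : ℝ)) O c = 2 ∨ ∃ d, (d = 1 ∨ d = -1) ∧ (∀ v, (v + d, v) ∉ O) ∧
      cycScore (fun _ _ => (1 : ℝ)) O c = n - 2 * #(O ∩ rotationSteps d) := by
  rcases hc.eq_one_or_exists_add_step hn with rfl | ⟨d, hd, hbij, hcd⟩
  · exact Or.inl hc.cycScore_eq_two
  refine Or.inr ⟨d, hd, fun v => ?_, cycScore_eq_of_add_step hbij hcd⟩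
  obtain ⟨i, rfl⟩ := hbij.2 v
  simpa [hcd] using (hc.2.2 i).2

lemma IsPO.subset_rotationSteps (hn : 2 ≤ n) {O : Finset (Fin n × Fin n)}
    (hO : IsPO (cycleGraph n) O) {d : Fin n} (hd : d = 1 ∨ d = -1) (hcompat : ∀ v, (v + d, v) ∉ O) :
    O ⊆ rotationSteps d := by
  intro p hp
  obtain ⟨e, he, hpe⟩ := (cycleGraph_adj_iff_exists_add hn).1 (hO p hp).1
  rw [mem_rotationSteps]
  by_contra hne
  have hed : e = -d := by
    rcases he with rfl | rfl <;> rcases hd with rfl | rfl <;> simp_all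
  have hp_eq : (p.2 + d, p.2) = p := Prod.ext (by rw [hpe, hed, neg_add_cancel_right]) rfl
  exact hcompat p.2 (hp_eq ▸ hp)

lemma isPO_of_subset_rotationSteps (hn : 3 ≤ n) {O : Finset (Fin n × Fin n)} {d : Fin n}
    (hd : d = 1 ∨ d = -1) (hO : O ⊆ rotationSteps d) : IsPO (cycleGraph n) O := by
  intro p hp
  refine ⟨(cycleGraph_adj_iff_exists_add (by omega)).2 ⟨d, hd, mem_rotationSteps.1 (hO hp)⟩,
    fun hswap => mk_add_notMem_rotationSteps hn hd p.1 ?_⟩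
  rw [← mem_rotationSteps.1 (hO hp)]
  exact hO hswap

lemma exists_isPotCycle_cycScore_eq (hn : 3 ≤ n) {O : Finset (Fin n × Fin n)} {d : Fin n}
    (hd : d = 1 ∨ d = -1) (hO : O ⊆ rotationSteps d) :
    ∃ (k : ℕ) (c : Fin (k + 1) → Fin n), IsPotCycle (cycleGraph n) O c ∧
      cycScore (fun _ _ => (1 : ℝ)) O c = n - 2 * #O := by
  obtain ⟨m, rfl⟩ : ∃ m, n = m + 1 := ⟨n - 1, by omega⟩
  have hdd : d * d = 1 := by rcases hd with rfl | rfl <;> ring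
  have hinj : Injective (d * ·) := fun i j h => by simpa [← mul_assoc, hdd] using congrArg (d * ·) h
  have hstep (i : Fin (m + 1)) : d * (i + 1) = d * i + d := by ring
  refine ⟨m, (d * ·), ⟨by omega, hinj, fun i => ⟨?_, fun h => ?_⟩⟩, ?_⟩
  · exact (cycleGraph_adj_iff_exists_add (by omega)).2 ⟨d, hd, hstep i⟩
  · dsimp only at h
    rw [hstep] at h
    exact mk_add_notMem_rotationSteps hn hd _ (hO h)
  · rw [cycScore_eq_of_add_step (bijective_of_add_step hd hinj hstep) hstep, inter_eq_left.2 hO]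

theorem isAlmostAdmissible_cycleGraph_iff (hn : 3 ≤ n) {O : Finset (Fin n × Fin n)}
    (hO : IsPO (cycleGraph n) O) :
    IsAlmostAdmissible (cycleGraph n) (fun _ _ => 1) O ↔
      2 * #O = n ∧ ∃ d : Fin n, (d = 1 ∨ d = -1) ∧ O ⊆ rotationSteps d := by
  constructor
  · rintro ⟨hnot, hnonneg⟩
    simp only [IsAdmissible, not_forall, not_lt] at hnot
    obtain ⟨k, c, hc, hle⟩ := hnot
    rcases hc.cycScore_eq_two_or_eq_rotation (by omega) with h2 | ⟨d, hd, hcompat, hscore⟩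
    · linarith
    have hsub := hO.subset_rotationSteps (by omega) hd hcompat
    rw [inter_eq_left.2 hsub] at hscore
    have h0 := hnonneg k c hc
    exact ⟨by exact_mod_cast (by linarith : (2 * #O : ℝ) = n), d, hd, hsub⟩
  · rintro ⟨hcard, d, hd, hsub⟩
    have hcard' : (2 * #O : ℝ) = n := by exact_mod_cast hcard
    refine ⟨fun hadm => ?_, fun k c hc => ?_⟩
    · obtain ⟨k, c, hc, hscore⟩ := exists_isPotCycle_cycScore_eq hn hd hsub
      linarith [hadm k c hc]
    · rcases hc.cycScore_eq_two_or_eq_rotation (by omega) with h2 | ⟨e, -, -, hscore⟩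
      · linarith
      · have : (#(O ∩ rotationSteps e) : ℝ) ≤ #O := by exact_mod_cast card_le_card inter_subset_left
        linarith

theorem isPO_and_isAlmostAdmissible_cycleGraph_iff (hn : 3 ≤ n) (heven : Even n)
    {O : Finset (Fin n × Fin n)} :
    IsPO (cycleGraph n) O ∧ IsAlmostAdmissible (cycleGraph n) (fun _ _ => 1) O ↔
      ∃ d : Fin n, (d = 1 ∨ d = -1) ∧ O ⊆ rotationSteps d ∧ #O = n / 2 := by
  have h2 := Nat.two_mul_div_two_of_even heven
  constructor
  · rintro ⟨hO, h⟩
    obtain ⟨hcard, d, hd, hsub⟩ := (isAlmostAdmissible_cycleGraph_iff hn hO).1 h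
    exact ⟨d, hd, hsub, by omega⟩
  · rintro ⟨d, hd, hsub, hcard⟩
    have hO := isPO_of_subset_rotationSteps hn hd hsub
    exact ⟨hO, (isAlmostAdmissible_cycleGraph_iff hn hO).2 ⟨by omega, d, hd, hsub⟩⟩

theorem ncard_setOf_isAlmostAdmissible_cycleGraph (hn : 3 ≤ n) (heven : Even n) :
    {O : Finset (Fin n × Fin n) | IsPO (cycleGraph n) O ∧
      IsAlmostAdmissible (cycleGraph n) (fun _ _ => 1) O}.ncard = 2 * n.choose (n / 2) := by
  have hset : {O : Finset (Fin n × Fin n) | IsPO (cycleGraph n) O ∧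
      IsAlmostAdmissible (cycleGraph n) (fun _ _ => 1) O} =
      ↑(powersetCard (n / 2) (rotationSteps (1 : Fin n)) ∪
        powersetCard (n / 2) (rotationSteps (-1))) := by
    ext O
    simp [isPO_and_isAlmostAdmissible_cycleGraph_iff hn heven, mem_powersetCard, or_and_right,
      exists_or]
  have hdisj : Disjoint (powersetCard (n / 2) (rotationSteps (1 : Fin n)))
      (powersetCard (n / 2) (rotationSteps (-1))) := by
    refine disjoint_left.2 fun O h1 h2 => ?_
    rw [mem_powersetCard] at h1 h2
    have hempty : O = ∅ := disjoint_self.1 ((disjoint_rotationSteps_one_neg_one hn).mono h1.1 h2.1)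
    have hcard := h1.2
    rw [hempty, card_empty] at hcard
    omega
  rw [hset, Set.ncard_coe_finset, card_union_of_disjoint hdisj, card_powersetCard,
    card_powersetCard, card_rotationSteps, card_rotationSteps, two_mul]

end CycleGraph

/-- For the cycle graph `Cₙ` with the SEMI parameter list (all parameters `1`): for odd `n`
there are no almost-SEMI-admissible partial orientations; for even `n` they are exactly the
orientations of exactly half of the edges, all oriented consistently in one of the two
rotational directions, and there are exactly `2·(n choose n/2)` of them. -/
theorem almost_semi_admissible_cycleGraph (n : ℕ) [NeZero n] (hn : 3 ≤ n) :
    (Odd n → ∀ O : Finset (Fin n × Fin n), IsPO (SimpleGraph.cycleGraph n) O →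
      ¬ IsAlmostAdmissible (SimpleGraph.cycleGraph n) (fun _ _ => (1 : ℝ)) O) ∧
    (Even n →
      (∀ O : Finset (Fin n × Fin n), IsPO (SimpleGraph.cycleGraph n) O →
        (IsAlmostAdmissible (SimpleGraph.cycleGraph n) (fun _ _ => (1 : ℝ)) O ↔
          O.card = n / 2 ∧
            ((∀ p ∈ O, p.2 = p.1 + 1) ∨ (∀ p ∈ O, p.1 = p.2 + 1)))) ∧
      Set.ncard {O : Finset (Fin n × Fin n) | IsPO (SimpleGraph.cycleGraph n) O ∧
          IsAlmostAdmissible (SimpleGraph.cycleGraph n) (fun _ _ => (1 : ℝ)) O} =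
        2 * n.choose (n / 2)) := by
  refine ⟨fun hodd O hO h => ?_, fun heven => ⟨fun O hO => ?_,
    ncard_setOf_isAlmostAdmissible_cycleGraph hn heven⟩⟩
  · obtain ⟨hcard, -⟩ := (isAlmostAdmissible_cycleGraph_iff hn hO).1 h
    exact Nat.not_even_iff_odd.2 hodd ⟨#O, by omega⟩
  · rw [isAlmostAdmissible_cycleGraph_iff hn hO, ← exists_subset_rotationSteps_iff]
    have := Nat.two_mul_div_two_of_even heven
    constructor <;> rintro ⟨hcard, hdir⟩ <;> exact ⟨by omega, hdir⟩
end

section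
/- For the cycle graph C_n (n ≥ 3), there are exactly 2n almost-SHI-admissible partial orientations. -/
open Finset SimpleGraph
open scoped Classical

variable {V : Type*} [Fintype V] [DecidableEq V]

/-- The SHI parameter list on `Fin n`: `a_{ij} = 1` if `i < j` and `0` if `i > j`. -/
def shi (n : ℕ) : Fin n → Fin n → ℝ := fun i j => if (i : ℕ) < (j : ℕ) then 1 else 0

/-!
In `Cₙ` an injective closed walk of length at least three cannot reverse direction, so it is one
of the two Hamiltonian cycles `v ↦ v + 1` and `v ↦ v - 1`; every other potential cycle runs back
and forth along a blank edge and has SHI score `1`. The forward cycle is compatible with `O` iff no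
edge is oriented backwards, and then its SHI score is the number of blank edges minus one; the
backward cycle is compatible iff no edge is oriented forwards, and then its score is one minus the
number of oriented edges. So `O` is almost-admissible exactly when either all edges but one are
oriented forwards and the remaining one is blank, or a single edge is oriented backwards and all others
are blank: `n` choices each.
-/

theorem Fin.induction_add_one {k : ℕ} {P : Fin (k + 1) → Prop} (zero : P 0)
    (succ : ∀ i, P i → P (i + 1)) : ∀ i, P i :=
  Fin.induction zero fun i hi => Fin.coeSucc_eq_succ (a := i) ▸ succ _ hi

theorem Fin.add_one_add_one_ne_self {k : ℕ} (hk : 2 ≤ k) (i : Fin (k + 1)) :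
    i + 1 + 1 ≠ i := by
  rw [add_assoc, ne_eq, add_eq_left]
  simp [Fin.ext_iff, Fin.val_add, Nat.mod_eq_of_lt (show 1 < k + 1 by omega),
    Nat.mod_eq_of_lt (show 2 < k + 1 by omega)]

theorem nsmul_eq_zero_of_add_eq {G : Type*} [AddCommGroup G] {k : ℕ} {c : Fin (k + 1) → G}
    {d : G} (h : ∀ i, c (i + 1) = c i + d) : (k + 1) • d = 0 := by
  have telescope : ∑ i, (c (i + 1) - c i) = 0 := by
    rw [sum_sub_distrib, sub_eq_zero]
    exact Fintype.sum_equiv (Equiv.addRight 1) _ _ fun _ => rfl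
  simpa [h] using telescope

section Rotation

variable {α : Type*} [Add α]

-- With `d = ±1` in `Fin n`: compatibility with `O`, and score, of the Hamiltonian cycle
-- `v ↦ v + d` of `Cₙ`.
def RotationCompatible (O : Finset (α × α)) (d : α) : Prop :=
  ∀ v, (v + d, v) ∉ O

noncomputable def rotationScore [Fintype α] [DecidableEq α] (a : α → α → ℝ)
    (O : Finset (α × α)) (d : α) : ℝ :=
  ∑ v, stepScore a O (v, v + d)

variable {k : ℕ} {c : Fin (k + 1) → α} {d : α}

theorem cycScore_eq_rotationScore [Fintype α] [DecidableEq α] (a : α → α → ℝ)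
    (O : Finset (α × α)) (hc : Function.Bijective c) (h : ∀ i, c (i + 1) = c i + d) :
    cycScore a O c = rotationScore a O d :=
  Fintype.sum_bijective c hc _ _ fun i => by rw [h]

theorem rotationCompatible_iff {O : Finset (α × α)} (hc : Function.Bijective c)
    (h : ∀ i, c (i + 1) = c i + d) :
    RotationCompatible O d ↔ ∀ i, (c (i + 1), c i) ∉ O := by
  simp only [RotationCompatible, h]
  exact hc.surjective.forall

end Rotation

theorem cycScore_of_two {α : Type*} [DecidableEq α] (a : α → α → ℝ)
    {O : Finset (α × α)} {c : Fin 2 → α} (hO : ∀ i, (c (i + 1), c i) ∉ O) :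
    cycScore a O c = a (c 0) (c 1) + a (c 1) (c 0) := by
  have h0 : (c 1, c 0) ∉ O := hO 0
  have h1 : (c 0, c 1) ∉ O := hO 1
  simp [cycScore, Fin.sum_univ_two, stepScore, h0, h1]

section CycleGraph

variable {n : ℕ}

theorem cycleGraph_adj_iff_sub {u v : Fin (n + 2)} :
    (cycleGraph (n + 2)).Adj u v ↔ v - u = 1 ∨ v - u = -1 := by
  rw [cycleGraph_adj, ← neg_sub, neg_eq_iff_eq_neg, or_comm]

theorem exists_add_eq_of_injective_of_adj {k : ℕ} {c : Fin (k + 1) → Fin (n + 2)} (hk : 2 ≤ k)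
    (hc : Function.Injective c) (hadj : ∀ i, (cycleGraph (n + 2)).Adj (c i) (c (i + 1))) :
    ∃ d : Fin (n + 2), (d = 1 ∨ d = -1) ∧ ∀ i, c (i + 1) = c i + d := by
  set d := fun i => c (i + 1) - c i
  have hd : ∀ i, d i = 1 ∨ d i = -1 := fun i => cycleGraph_adj_iff_sub.mp (hadj i)
  have no_backtrack : ∀ i, d i + d (i + 1) ≠ 0 := by
    intro i h
    refine Fin.add_one_add_one_ne_self hk i (hc ?_)
    simp only [d] at h
    rw [← sub_eq_zero, ← h]
    abel
  have const : ∀ i, d i = d 0 := by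
    refine Fin.induction_add_one rfl fun i hi => ?_
    rw [← hi]
    rcases hd i with h | h <;> rcases hd (i + 1) with h' | h' <;> rw [h, h'] <;>
      first | rfl | exact absurd (by rw [h, h']; abel) (no_backtrack i)
  exact ⟨d 0, hd 0, fun i => by rw [← const i]; simp [d]⟩

theorem bijective_of_add_eq {k : ℕ} {c : Fin (k + 1) → Fin (n + 2)} (hc : Function.Injective c)
    {d : Fin (n + 2)} (hd : d = 1 ∨ d = -1) (h : ∀ i, c (i + 1) = c i + d) :
    Function.Bijective c := by
  have hdvd : n + 2 ∣ k + 1 := by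
    have := nsmul_eq_zero_of_add_eq h
    open Fin.CommRing in rcases hd with rfl | rfl <;> simpa [nsmul_one, -Nat.cast_add] using this
  have hle : k + 1 ≤ n + 2 := by simpa using Fintype.card_le_of_injective c hc
  refine (Fintype.bijective_iff_injective_and_card c).mpr ⟨hc, ?_⟩
  simpa using le_antisymm hle (Nat.le_of_dvd (by omega) hdvd)

open Fin.CommRing in
theorem exists_isPotCycle_rotation (a : Fin (n + 2) → Fin (n + 2) → ℝ)
    {O : Finset (Fin (n + 2) × Fin (n + 2))} {d : Fin (n + 2)} (hd : d = 1 ∨ d = -1)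
    (hO : RotationCompatible O d) :
    ∃ (k : ℕ) (c : Fin (k + 1) → Fin (n + 2)),
      IsPotCycle (cycleGraph (n + 2)) O c ∧ cycScore a O c = rotationScore a O d := by
  have hstep : ∀ i : Fin (n + 1 + 1), d * (i + 1) = d * i + d := fun i => by ring
  have hinj : Function.Injective fun i : Fin (n + 1 + 1) => d * i := by
    have hdd : d * d = 1 := by rcases hd with rfl | rfl <;> ring
    intro i j h
    simpa [← mul_assoc, hdd] using congrArg (d * ·) h
  have hbij := bijective_of_add_eq hinj hd hstep
  refine ⟨n + 1, fun i => d * i, ⟨by omega, hinj, fun i => ⟨?_, ?_⟩⟩,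
    cycScore_eq_rotationScore a O hbij hstep⟩
  · rw [cycleGraph_adj_iff_sub]
    simpa only [hstep, add_sub_cancel_left] using hd
  · exact (rotationCompatible_iff hbij hstep).mp hO i

theorem IsPotCycle.cycleGraph_cases (a : Fin (n + 2) → Fin (n + 2) → ℝ)
    {O : Finset (Fin (n + 2) × Fin (n + 2))} {k : ℕ} {c : Fin (k + 1) → Fin (n + 2)}
    (hc : IsPotCycle (cycleGraph (n + 2)) O c) :
    (∃ u v, u ≠ v ∧ cycScore a O c = a u v + a v u) ∨
      ∃ d : Fin (n + 2), (d = 1 ∨ d = -1) ∧ RotationCompatible O d ∧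
        cycScore a O c = rotationScore a O d := by
  obtain ⟨hk, hinj, hstep⟩ := hc
  rcases hk.eq_or_lt with rfl | hk
  · exact .inl ⟨c 0, c 1, hinj.ne (by decide), cycScore_of_two a fun i => (hstep i).2⟩
  · obtain ⟨d, hd, h⟩ := exists_add_eq_of_injective_of_adj hk hinj fun i => (hstep i).1
    have hbij := bijective_of_add_eq hinj hd h
    exact .inr ⟨d, hd, (rotationCompatible_iff hbij h).mpr fun i => (hstep i).2,
      cycScore_eq_rotationScore a O hbij h⟩

theorem isAlmostAdmissible_cycleGraph_iff_s17 {a : Fin (n + 2) → Fin (n + 2) → ℝ}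
    (ha : ∀ u v, u ≠ v → 0 < a u v + a v u) {O : Finset (Fin (n + 2) × Fin (n + 2))} :
    IsAlmostAdmissible (cycleGraph (n + 2)) a O ↔
      (∀ d : Fin (n + 2), (d = 1 ∨ d = -1) → RotationCompatible O d →
        0 ≤ rotationScore a O d) ∧
      ∃ d : Fin (n + 2), (d = 1 ∨ d = -1) ∧ RotationCompatible O d ∧
        rotationScore a O d = 0 := by
  constructor
  · rintro ⟨hnotAdm, hnonneg⟩
    have hrot : ∀ d : Fin (n + 2), (d = 1 ∨ d = -1) → RotationCompatible O d →
        0 ≤ rotationScore a O d := by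
      intro d hd hO
      obtain ⟨k, c, hc, hscore⟩ := exists_isPotCycle_rotation a hd hO
      exact hscore ▸ hnonneg k c hc
    simp only [IsAdmissible, not_forall, not_lt] at hnotAdm
    obtain ⟨k, c, hc, hle⟩ := hnotAdm
    rcases hc.cycleGraph_cases a with ⟨u, v, huv, hscore⟩ | ⟨d, hd, hO, hscore⟩
    · exact absurd (hscore ▸ hle) (ha u v huv).not_ge
    · exact ⟨hrot, d, hd, hO, le_antisymm (hscore ▸ hle) (hrot d hd hO)⟩
  · rintro ⟨hrot, d, hd, hO, hzero⟩
    refine ⟨fun hAdm => ?_, fun k c hc => ?_⟩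
    · obtain ⟨k, c, hc, hscore⟩ := exists_isPotCycle_rotation a hd hO
      exact (hAdm k c hc).ne' (hscore.trans hzero)
    · rcases hc.cycleGraph_cases a with ⟨u, v, huv, hscore⟩ | ⟨d, hd, hO, hscore⟩
      · exact hscore ▸ (ha u v huv).le
      · exact hscore ▸ hrot d hd hO

end CycleGraph

section Shi

variable {n : ℕ}

theorem shi_add_shi_of_ne {u v : Fin n} (h : u ≠ v) : shi n u v + shi n v u = 1 := by
  rcases Fin.lt_or_lt_of_ne h with h | h <;>
    simp [shi, Fin.lt_def.mp h, (Fin.lt_def.mp h).not_gt]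

theorem shi_self_add_one (v : Fin (n + 2)) :
    shi (n + 2) v (v + 1) = if v = Fin.last (n + 1) then 0 else 1 := by
  split_ifs with h
  · simp [shi, h]
  · simp [shi, Fin.val_add_one, h]

theorem shi_add_one_self (v : Fin (n + 2)) :
    shi (n + 2) (v + 1) v = if v = Fin.last (n + 1) then 1 else 0 := by
  split_ifs with h
  · simp [shi, h]
  · simp [shi, Fin.val_add_one, h]

theorem rotationScore_shi_one (O : Finset (Fin (n + 2) × Fin (n + 2))) :
    rotationScore (shi (n + 2)) O 1 = #{v | (v, v + 1) ∉ O} - 1 := by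
  have step : ∀ v, stepScore (shi (n + 2)) O (v, v + 1) =
      (if (v, v + 1) ∉ O then 1 else 0) - if v = Fin.last (n + 1) then 1 else 0 := by
    intro v
    simp only [stepScore, shi_self_add_one, shi_add_one_self]
    split_ifs <;> norm_num
  rw [rotationScore, sum_congr rfl fun v _ => step v, sum_sub_distrib, sum_boole, sum_boole]
  simp [filter_eq']

theorem rotationScore_shi_neg_one (O : Finset (Fin (n + 2) × Fin (n + 2))) :
    rotationScore (shi (n + 2)) O (-1) = 1 - #{v | (v + 1, v) ∈ O} := by
  have step : ∀ v, stepScore (shi (n + 2)) O (v + 1, v) =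
      (if v = Fin.last (n + 1) then 1 else 0) - if (v + 1, v) ∈ O then 1 else 0 := by
    intro v
    simp only [stepScore, shi_self_add_one, shi_add_one_self]
    split_ifs <;> norm_num
  rw [rotationScore, ← Fintype.sum_equiv (Equiv.addRight 1)
    (fun v => stepScore (shi (n + 2)) O (v + 1, v)) _ fun v => by simp]
  simp [step, sum_sub_distrib]

end Shi

section Orientations

variable {n : ℕ}

theorem IsPO.cycleGraph_arc {O : Finset (Fin (n + 2) × Fin (n + 2))}
    (hO : IsPO (cycleGraph (n + 2)) O) {u v : Fin (n + 2)} (huv : (u, v) ∈ O) :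
    v = u + 1 ∨ u = v + 1 := by
  rcases cycleGraph_adj_iff_sub.mp (hO _ huv).1 with h | h
  · exact .inl (sub_eq_iff_eq_add'.mp h)
  · rw [← neg_sub, neg_inj] at h
    exact .inr (sub_eq_iff_eq_add'.mp h)

def forwardExcept (j : Fin (n + 2)) : Finset (Fin (n + 2) × Fin (n + 2)) :=
  (univ.erase j).image fun i => (i, i + 1)

def backwardAt (j : Fin (n + 2)) : Finset (Fin (n + 2) × Fin (n + 2)) :=
  {(j + 1, j)}

theorem mem_forwardExcept {j u v : Fin (n + 2)} :
    (u, v) ∈ forwardExcept j ↔ u ≠ j ∧ v = u + 1 := by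
  simp [forwardExcept, eq_comm]

theorem eq_forwardExcept_of_rotationScore_shi_one_eq_zero
    {O : Finset (Fin (n + 2) × Fin (n + 2))} (hPO : IsPO (cycleGraph (n + 2)) O)
    (hO : RotationCompatible O 1)
    (hzero : rotationScore (shi (n + 2)) O 1 = 0) : ∃ j, forwardExcept j = O := by
  rw [rotationScore_shi_one, sub_eq_zero, Nat.cast_eq_one, card_eq_one] at hzero
  obtain ⟨j, hj⟩ := hzero
  have hblank : ∀ v, (v, v + 1) ∉ O ↔ v = j := fun v => by simpa using Finset.ext_iff.mp hj v
  refine ⟨j, Finset.ext fun ⟨u, v⟩ => ?_⟩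
  rw [mem_forwardExcept]
  constructor
  · rintro ⟨hu, rfl⟩
    exact of_not_not (mt (hblank u).mp hu)
  · intro huv
    rcases hPO.cycleGraph_arc huv with rfl | rfl
    · exact ⟨fun hu => (hblank u).mpr hu huv, rfl⟩
    · exact absurd huv (hO v)

theorem eq_backwardAt_of_rotationScore_shi_neg_one_eq_zero
    {O : Finset (Fin (n + 2) × Fin (n + 2))} (hPO : IsPO (cycleGraph (n + 2)) O)
    (hO : RotationCompatible O (-1)) (hzero : rotationScore (shi (n + 2)) O (-1) = 0) :
    ∃ j, backwardAt j = O := by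
  rw [rotationScore_shi_neg_one, sub_eq_zero, eq_comm, Nat.cast_eq_one, card_eq_one] at hzero
  obtain ⟨j, hj⟩ := hzero
  have harc : ∀ v, (v + 1, v) ∈ O ↔ v = j := fun v => by simpa using Finset.ext_iff.mp hj v
  refine ⟨j, Finset.ext fun ⟨u, v⟩ => ?_⟩
  simp only [backwardAt, mem_singleton, Prod.mk.injEq]
  constructor
  · rintro ⟨rfl, rfl⟩
    exact (harc _).mpr rfl
  · intro huv
    rcases hPO.cycleGraph_arc huv with rfl | rfl
    · exact absurd huv (by simpa using hO (u + 1))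
    · obtain rfl := (harc v).mp huv
      exact ⟨rfl, rfl⟩

theorem rotationCompatible_forwardExcept (j : Fin (n + 3)) :
    RotationCompatible (forwardExcept j) 1 := fun v hv =>
  Fin.add_one_add_one_ne_self (by omega) v (mem_forwardExcept.mp hv).2.symm

theorem isPO_forwardExcept (j : Fin (n + 3)) : IsPO (cycleGraph (n + 3)) (forwardExcept j) := by
  rintro ⟨u, v⟩ huv
  obtain ⟨-, rfl⟩ := mem_forwardExcept.mp huv
  exact ⟨cycleGraph_adj_iff_sub.mpr (.inl (add_sub_cancel_left u 1)),
    rotationCompatible_forwardExcept j u⟩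

theorem not_rotationCompatible_neg_one_forwardExcept (j : Fin (n + 3)) :
    ¬RotationCompatible (forwardExcept j) (-1) := fun h =>
  h (j + 1 + 1) (by simp [mem_forwardExcept])

theorem rotationScore_shi_forwardExcept (j : Fin (n + 3)) :
    rotationScore (shi (n + 3)) (forwardExcept j) 1 = 0 := by
  rw [rotationScore_shi_one]
  simp [mem_forwardExcept, filter_eq']

theorem rotationCompatible_neg_one_backwardAt (j : Fin (n + 3)) :
    RotationCompatible (backwardAt j) (-1) := by
  intro v hv
  simp only [backwardAt, mem_singleton, Prod.mk.injEq] at hv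
  obtain ⟨hv, rfl⟩ := hv
  exact Fin.add_one_add_one_ne_self (by omega) v (by rw [← hv, neg_add_cancel_right])

theorem isPO_backwardAt (j : Fin (n + 3)) : IsPO (cycleGraph (n + 3)) (backwardAt j) := by
  rintro p hp
  rw [backwardAt, mem_singleton] at hp
  subst hp
  refine ⟨cycleGraph_adj_iff_sub.mpr (.inr (by simp)), ?_⟩
  simpa using rotationCompatible_neg_one_backwardAt j (j + 1)

theorem not_rotationCompatible_one_backwardAt (j : Fin (n + 3)) :
    ¬RotationCompatible (backwardAt j) 1 := fun h =>
  h j (mem_singleton_self _)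

theorem rotationScore_shi_backwardAt (j : Fin (n + 3)) :
    rotationScore (shi (n + 3)) (backwardAt j) (-1) = 0 := by
  rw [rotationScore_shi_neg_one]
  simp [backwardAt, filter_eq']

theorem forwardExcept_injective : Function.Injective (forwardExcept (n := n)) := by
  intro j j' h
  by_contra hne
  have hmem : (j', j' + 1) ∈ forwardExcept j := mem_forwardExcept.mpr ⟨Ne.symm hne, rfl⟩
  rw [h, mem_forwardExcept] at hmem
  exact hmem.1 rfl

theorem backwardAt_injective : Function.Injective (backwardAt (n := n)) := fun _ _ h =>
  congrArg Prod.snd (singleton_injective h)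

theorem forwardExcept_ne_backwardAt (j j' : Fin (n + 3)) : forwardExcept j ≠ backwardAt j' :=
  fun h => not_rotationCompatible_neg_one_forwardExcept j
    (h ▸ rotationCompatible_neg_one_backwardAt j')

end Orientations

theorem isPO_and_isAlmostAdmissible_shi_iff {n : ℕ} {O : Finset (Fin (n + 3) × Fin (n + 3))} :
    IsPO (cycleGraph (n + 3)) O ∧ IsAlmostAdmissible (cycleGraph (n + 3)) (shi (n + 3)) O ↔
      (∃ j, forwardExcept j = O) ∨ ∃ j, backwardAt j = O := by
  rw [isAlmostAdmissible_cycleGraph_iff_s17 fun u v h => (shi_add_shi_of_ne h).symm ▸ one_pos]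
  constructor
  · rintro ⟨hPO, -, d, rfl | rfl, hO, hzero⟩
    · exact .inl (eq_forwardExcept_of_rotationScore_shi_one_eq_zero hPO hO hzero)
    · exact .inr (eq_backwardAt_of_rotationScore_shi_neg_one_eq_zero hPO hO hzero)
  · rintro (⟨j, rfl⟩ | ⟨j, rfl⟩)
    · refine ⟨isPO_forwardExcept j, ?_, 1, .inl rfl, rotationCompatible_forwardExcept j,
        rotationScore_shi_forwardExcept j⟩
      rintro d (rfl | rfl) hO
      · exact (rotationScore_shi_forwardExcept j).ge
      · exact absurd hO (not_rotationCompatible_neg_one_forwardExcept j)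
    · refine ⟨isPO_backwardAt j, ?_, -1, .inr rfl, rotationCompatible_neg_one_backwardAt j,
        rotationScore_shi_backwardAt j⟩
      rintro d (rfl | rfl) hO
      · exact absurd hO (not_rotationCompatible_one_backwardAt j)
      · exact (rotationScore_shi_backwardAt j).ge

/-- For the cycle graph `Cₙ` (`n ≥ 3`) there are exactly `2n` almost-SHI-admissible partial
orientations. -/
theorem almost_shi_admissible_cycleGraph_card (n : ℕ) (hn : 3 ≤ n) :
    Set.ncard {O : Finset (Fin n × Fin n) | IsPO (SimpleGraph.cycleGraph n) O ∧
        IsAlmostAdmissible (SimpleGraph.cycleGraph n) (shi n) O} = 2 * n := by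
  obtain ⟨m, rfl⟩ : ∃ m, n = m + 3 := ⟨n - 3, by omega⟩
  have hset : {O | IsPO (cycleGraph (m + 3)) O ∧
      IsAlmostAdmissible (cycleGraph (m + 3)) (shi (m + 3)) O} =
      Set.range (Sum.elim forwardExcept backwardAt) := by
    ext O
    rw [Set.Sum.elim_range]
    exact isPO_and_isAlmostAdmissible_shi_iff
  have hinj : Function.Injective (Sum.elim (forwardExcept (n := m + 1)) backwardAt) :=
    forwardExcept_injective.sumElim backwardAt_injective forwardExcept_ne_backwardAt
  rw [hset, Set.ncard_range_of_injective hinj, Nat.card_sum, Nat.card_eq_fintype_card,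
    Fintype.card_fin]
  ring
end

section
/- For the cycle graph C_n, the number of SEMI-admissible partial orientations equals 3^n - 2^n when n is odd, and 3^n - 2^n - binom(n, n/2) when n is even. -/
open Finset SimpleGraph
open scoped Classical

variable {V : Type*} [Fintype V] [DecidableEq V]

/-!
A potential cycle of length two runs back and forth along a blank edge and scores `2`. A longer
injective closed walk in `Cₙ` can never turn back, so it traverses the whole cycle in one
direction; it is a potential cycle exactly when no edge is oriented against that direction, and
then its SEMI score is `n` minus twice the number of edges oriented along it. Hence a partial
orientation fails to be admissible iff all its oriented edges point the same way and make up at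
least half of the cycle. Such orientations correspond to a direction together with a set `S` of
edges with `n ≤ 2 |S|`, and complementation of `S` shows that there are `2ⁿ + #{S | 2 |S| = n}`
of them.
-/

theorem Finset.two_mul_card_filter_card_le_two_mul_card (α : Type*) [Fintype α] :
    2 * #{s : Finset α | Fintype.card α ≤ 2 * #s} =
      2 ^ Fintype.card α + #{s : Finset α | 2 * #s = Fintype.card α} := by
  set N := Fintype.card α
  have h_total : #{s : Finset α | N ≤ 2 * #s} + #{s : Finset α | ¬ N ≤ 2 * #s} = 2 ^ N := by
    rw [card_filter_add_card_filter_not, card_univ, Fintype.card_finset]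
  have h_split : #{s : Finset α | N ≤ 2 * #s} =
      #{s : Finset α | N < 2 * #s} + #{s : Finset α | 2 * #s = N} := by
    rw [← card_union_of_disjoint (disjoint_filter.2 fun _ _ h h' => by omega)]
    congr 1
    ext s
    simp only [mem_filter, mem_univ, true_and, mem_union]
    omega
  have h_compl : #{s : Finset α | N < 2 * #s} = #{s : Finset α | ¬ N ≤ 2 * #s} := by
    refine card_nbij' compl compl (fun s hs => ?_) (fun s hs => ?_) (fun s _ => compl_compl s)
      (fun s _ => compl_compl s) <;>
    · simp only [coe_filter, mem_univ, true_and, Set.mem_ofPred_eq, card_compl] at hs ⊢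
      have := card_le_univ s
      omega
  omega

theorem Finset.card_filter_two_mul_card_eq (α : Type*) [Fintype α] :
    #{s : Finset α | 2 * #s = Fintype.card α} =
      if Even (Fintype.card α) then (Fintype.card α).choose (Fintype.card α / 2) else 0 := by
  split_ifs with h
  · have h_slice := card_powersetCard (Fintype.card α / 2) (univ : Finset α)
    rw [card_univ] at h_slice
    rw [← h_slice]
    congr 1
    ext s
    rw [mem_filter, mem_powersetCard_univ]
    grind
  · rw [card_eq_zero, filter_eq_empty_iff]
    rintro s - hs
    exact h ⟨#s, by omega⟩

section
variable {α : Type*} [Fintype α] [DecidableEq α]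

/-- With `f` the edge states of an orientation of `Cₙ` (see `ofEdgeStates`), this says that the
traversal of the cycle in direction `b` is a potential cycle of non-positive SEMI score. -/
def OneWayMajority (b : Bool) (f : α → Option Bool) : Prop :=
  (∀ v, f v ≠ some !b) ∧ Fintype.card α ≤ 2 * #{v | f v = some b}

theorem card_filter_oneWayMajority (b : Bool) :
    #{f : α → Option Bool | OneWayMajority b f} =
      #{S : Finset α | Fintype.card α ≤ 2 * #S} := by
  have h_supp (S : Finset α) :
      ({v | (if v ∈ S then some b else none) = some b} : Finset α) = S := by
    ext v
    by_cases h : v ∈ S <;> simp [h]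
  refine card_nbij' (fun f => ({v | f v = some b} : Finset α))
    (fun S v => if v ∈ S then some b else none)
    (fun f hf => ?_) (fun S hS => ?_) (fun f hf => ?_) (fun S _ => h_supp S)
  · simp only [mem_coe, mem_filter, mem_univ, true_and] at hf ⊢
    exact hf.2
  · simp only [mem_coe, mem_filter, mem_univ, true_and] at hS ⊢
    refine ⟨fun v => ?_, (h_supp S).symm ▸ hS⟩
    by_cases h : v ∈ S <;> simp [h]
  · simp only [mem_coe, mem_filter, mem_univ, true_and] at hf
    funext v
    have h_not_opposite := hf.1 v
    dsimp only
    split_ifs with h <;> simp only [mem_filter, mem_univ, true_and] at h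
    · exact h.symm
    · cases hv : f v with
      | none => rfl
      | some b' => cases b <;> cases b' <;> simp_all

theorem card_filter_forall_not_oneWayMajority [Nonempty α] :
    #{f : α → Option Bool | ∀ b, ¬ OneWayMajority b f} =
      3 ^ Fintype.card α - 2 * #{S : Finset α | Fintype.card α ≤ 2 * #S} := by
  have h_disj : Disjoint (univ.filter (OneWayMajority (α := α) true))
      (univ.filter (OneWayMajority false)) := by
    refine disjoint_filter.2 fun f _ htrue hfalse => ?_
    have h_pos : 0 < #{v | f v = some true} := by
      have := htrue.2
      have := Fintype.card_pos (α := α)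
      omega
    obtain ⟨v, hv⟩ := card_pos.1 h_pos
    exact hfalse.1 v (by simpa using hv)
  have h_bad := card_union_of_disjoint h_disj
  rw [card_filter_oneWayMajority, card_filter_oneWayMajority] at h_bad
  have h_compl : #{f : α → Option Bool | ∀ b, ¬ OneWayMajority b f} +
      #(univ.filter (OneWayMajority (α := α) true) ∪ univ.filter (OneWayMajority false)) =
        3 ^ Fintype.card α := by
    have h_good : ∀ f : α → Option Bool, (∀ b, ¬ OneWayMajority b f) ↔
        ¬ (OneWayMajority true f ∨ OneWayMajority false f) := fun f => by
      rw [Bool.forall_bool, not_or, and_comm]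
    rw [filter_congr fun f _ => h_good f, ← filter_or, add_comm, card_filter_add_card_filter_not,
      card_univ, Fintype.card_fun, Fintype.card_option, Fintype.card_bool]
  omega

end

section
open Fin.NatCast Fin.CommRing

theorem Fin.add_one_induction {n : ℕ} [NeZero n] {P : Fin n → Prop}
    (h : ∀ x, P x → P (x + 1)) {x : Fin n} (hx : P x) (y : Fin n) : P y := by
  have key : ∀ m : ℕ, P (x + m) := by
    intro m
    induction m with
    | zero => simpa using hx
    | succ m ih => simpa [add_assoc] using h _ ih
  simpa using key (y - x).val

end

theorem Fin.add_one_add_one_ne_self_s19 {n : ℕ} [NeZero n] (hn : 3 ≤ n) (i : Fin n) :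
    i + 1 + 1 ≠ i := by
  simp only [add_assoc, Ne, add_eq_left, Fin.ext_iff, Fin.val_add, Fin.val_one', Fin.val_zero]
  rw [Nat.one_mod_eq_one.2 (by omega), Nat.mod_eq_of_lt (by omega)]
  omega

theorem forall_eq_add_or_forall_eq_sub_of_injective {G : Type*} [AddCommGroup G] {k : ℕ}
    (hk : 2 ≤ k) {c : Fin (k + 1) → G} (hc : Function.Injective c) {e : G}
    (hstep : ∀ i, c (i + 1) = c i + e ∨ c (i + 1) = c i - e) :
    (∀ i, c (i + 1) = c i + e) ∨ (∀ i, c (i + 1) = c i - e) := by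
  have h_no_turn : ∀ i, c (i + 1 + 1) - c (i + 1) = c (i + 1) - c i := by
    intro i
    have h_back : c (i + 1 + 1) ≠ c i := fun h => Fin.add_one_add_one_ne_self_s19 (by omega) i (hc h)
    rcases hstep i with h | h <;> rcases hstep (i + 1) with h' | h'
    · rw [h', h]; abel
    · exact absurd (by rw [h', h]; abel) h_back
    · exact absurd (by rw [h', h]; abel) h_back
    · rw [h', h]; abel
  have h_const : ∀ i, c (i + 1) = c i + (c 1 - c 0) := by
    refine Fin.add_one_induction (P := fun i => c (i + 1) = c i + (c 1 - c 0))
      (fun i hi => ?_) (x := 0) (by rw [zero_add]; abel)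
    rw [← sub_eq_iff_eq_add'] at hi ⊢
    exact (h_no_turn i).trans hi
  rcases hstep 0 with h | h <;> rw [zero_add] at h <;> [left; right] <;> intro i <;>
    rw [h_const i, h] <;> abel

theorem cycScore_eq_sum_of_bijective (a : V → V → ℝ) (O : Finset (V × V)) {k : ℕ}
    {c : Fin (k + 1) → V} (hc : Function.Bijective c) {s : V → V}
    (hs : ∀ i, c (i + 1) = s (c i)) :
    cycScore a O c = ∑ v, stepScore a O (v, s v) :=
  Fintype.sum_bijective c hc _ _ fun i => by rw [hs]

theorem sum_stepScore_one (O : Finset (V × V)) (s : V → V) :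
    ∑ v, stepScore (fun _ _ => (1 : ℝ)) O (v, s v) =
      Fintype.card V - 2 * #{v | (v, s v) ∈ O} := by
  have h_count := card_filter_add_card_filter_not (s := univ) (p := fun v => (v, s v) ∈ O)
  rw [card_univ] at h_count
  simp only [stepScore, sum_ite, sum_const, nsmul_eq_mul, mul_one, mul_neg]
  rw [← h_count]
  push_cast
  ring

theorem cycScore_of_isPotCycle_fin_two {α : Type*} [DecidableEq α] {G : SimpleGraph α}
    (a : α → α → ℝ) {O : Finset (α × α)} {c : Fin 2 → α} (hc : IsPotCycle G O c) :
    cycScore a O c = a (c 0) (c 1) + a (c 1) (c 0) := by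
  have h0 := (hc.2.2 0).2
  have h1 := (hc.2.2 1).2
  simp only [show (0 + 1 : Fin 2) = 1 from rfl, show (1 + 1 : Fin 2) = 0 from rfl] at h0 h1
  simp [cycScore, stepScore, Fin.sum_univ_two, h0, h1]

section
variable {n : ℕ} [NeZero n]

theorem cycleGraph_adj_iff (hn : 1 < n) {u v : Fin n} :
    (cycleGraph n).Adj u v ↔ v = u + 1 ∨ u = v + 1 := by
  have h_one : (1 : Fin n).val = 1 := by rw [Fin.val_one']; exact Nat.mod_eq_of_lt hn
  rw [cycleGraph_adj', ← h_one, ← Fin.ext_iff, ← Fin.ext_iff, or_comm, sub_eq_iff_eq_add',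
    sub_eq_iff_eq_add']

theorem cycleGraph_adj_add (hn : 1 < n) {e : Fin n} (he : e = 1 ∨ e = -1) (v : Fin n) :
    (cycleGraph n).Adj v (v + e) := by
  rw [cycleGraph_adj_iff hn]
  rcases he with rfl | rfl
  · exact Or.inl rfl
  · exact Or.inr (neg_add_cancel_right v 1).symm

theorem surjective_of_forall_eq_add_one {k : ℕ} {c : Fin (k + 1) → Fin n}
    (h : ∀ i, c (i + 1) = c i + 1) : Function.Surjective c :=
  Fin.add_one_induction (P := (· ∈ Set.range c))
    (fun _ ⟨i, hi⟩ => ⟨i + 1, by rw [h, hi]⟩) ⟨0, rfl⟩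

theorem exists_step_of_isPotCycle_cycleGraph (hn : 1 < n) {O : Finset (Fin n × Fin n)}
    {k : ℕ} (hk : 2 ≤ k) {c : Fin (k + 1) → Fin n} (hc : IsPotCycle (cycleGraph n) O c) :
    ∃ e : Fin n, (e = 1 ∨ e = -1) ∧ Function.Bijective c ∧ ∀ i, c (i + 1) = c i + e := by
  obtain ⟨-, hinj, hadj⟩ := hc
  have h_steps (i : Fin (k + 1)) : c (i + 1) = c i + 1 ∨ c (i + 1) = c i - 1 :=
    ((cycleGraph_adj_iff hn).1 (hadj i).1).imp_right fun h => eq_sub_of_add_eq h.symm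
  rcases forall_eq_add_or_forall_eq_sub_of_injective hk hinj h_steps with h | h
  · exact ⟨1, Or.inl rfl, ⟨hinj, surjective_of_forall_eq_add_one h⟩, h⟩
  · have h_neg : Function.Surjective (-c) :=
      surjective_of_forall_eq_add_one fun i => by simp [h, sub_eq_neg_add]
    refine ⟨-1, Or.inr rfl, ⟨hinj, fun v => ?_⟩, fun i => by rw [h, sub_eq_add_neg]⟩
    obtain ⟨i, hi⟩ := h_neg (-v)
    exact ⟨i, neg_injective hi⟩

theorem exists_bijective_forall_eq_add {e : Fin n} (he : e = 1 ∨ e = -1) :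
    ∃ (k : ℕ) (c : Fin (k + 1) → Fin n),
      Function.Bijective c ∧ ∀ i, c (i + 1) = c i + e := by
  obtain ⟨m, rfl⟩ : ∃ m, n = m + 1 := Nat.exists_eq_succ_of_ne_zero (NeZero.ne n)
  rcases he with rfl | rfl
  · exact ⟨m, id, Function.bijective_id, fun _ => rfl⟩
  · exact ⟨m, Neg.neg, neg_bijective, fun i => neg_add i 1⟩

theorem isAdmissible_cycleGraph_one_iff (hn : 1 < n) (O : Finset (Fin n × Fin n)) :
    IsAdmissible (cycleGraph n) (fun _ _ => (1 : ℝ)) O ↔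
      ∀ e : Fin n, (e = 1 ∨ e = -1) → (∀ v, (v + e, v) ∉ O) →
        2 * #{v | (v, v + e) ∈ O} < n := by
  constructor
  · intro hadm e he h_compat
    obtain ⟨k, c, hbij, hstep⟩ := exists_bijective_forall_eq_add he
    have hkn : k + 1 = n := by simpa using Fintype.card_of_bijective hbij
    have hpot : IsPotCycle (cycleGraph n) O c :=
      ⟨by omega, hbij.1, fun i => hstep i ▸ ⟨cycleGraph_adj_add hn he _, h_compat _⟩⟩
    have h_pos := hadm k c hpot
    rw [cycScore_eq_sum_of_bijective _ _ hbij (s := (· + e)) hstep, sum_stepScore_one,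
      Fintype.card_fin] at h_pos
    exact_mod_cast (by linarith : (2 * #{v | (v, v + e) ∈ O} : ℝ) < n)
  · intro h k c hc
    obtain rfl | hk : k = 1 ∨ 2 ≤ k := by have := hc.1; omega
    · rw [cycScore_of_isPotCycle_fin_two _ hc]
      norm_num
    obtain ⟨e, he, hbij, hstep⟩ := exists_step_of_isPotCycle_cycleGraph hn hk hc
    have h_compat : ∀ v, (v + e, v) ∉ O := fun v => by
      obtain ⟨i, rfl⟩ := hbij.2 v
      exact hstep i ▸ (hc.2.2 i).2
    have h_lt : (2 * #{v | (v, v + e) ∈ O} : ℝ) < n := by exact_mod_cast h e he h_compat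
    rw [cycScore_eq_sum_of_bijective _ _ hbij (s := (· + e)) hstep, sum_stepScore_one,
      Fintype.card_fin]
    linarith

/-- `f v` is the state of the edge `{v, v + 1}`: `none` is blank, `some true` orients it
`v → v + 1` and `some false` orients it `v + 1 → v`. -/
def ofEdgeStates (f : Fin n → Option Bool) : Finset (Fin n × Fin n) :=
  {p | (p.2 = p.1 + 1 ∧ f p.1 = some true) ∨ (p.1 = p.2 + 1 ∧ f p.2 = some false)}

theorem mem_ofEdgeStates_add_one (hn : 3 ≤ n) (f : Fin n → Option Bool) (v : Fin n) :
    (v, v + 1) ∈ ofEdgeStates f ↔ f v = some true := by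
  simp [ofEdgeStates, (Fin.add_one_add_one_ne_self_s19 hn v).symm]

theorem add_one_mem_ofEdgeStates (hn : 3 ≤ n) (f : Fin n → Option Bool) (v : Fin n) :
    (v + 1, v) ∈ ofEdgeStates f ↔ f v = some false := by
  simp [ofEdgeStates, (Fin.add_one_add_one_ne_self_s19 hn v).symm]

theorem isPO_ofEdgeStates (hn : 3 ≤ n) (f : Fin n → Option Bool) :
    IsPO (cycleGraph n) (ofEdgeStates f) := by
  rintro ⟨u, v⟩ hp
  simp only [ofEdgeStates, mem_filter, mem_univ, true_and] at hp
  rcases hp with ⟨rfl, h⟩ | ⟨rfl, h⟩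
  · exact ⟨cycleGraph_adj_add (by omega) (Or.inl rfl) u,
      by simp [add_one_mem_ofEdgeStates hn, h]⟩
  · exact ⟨(cycleGraph_adj_add (by omega) (Or.inl rfl) v).symm,
      by simp [mem_ofEdgeStates_add_one hn, h]⟩

theorem exists_ofEdgeStates_eq (hn : 3 ≤ n) {O : Finset (Fin n × Fin n)}
    (hO : IsPO (cycleGraph n) O) : ∃ f, ofEdgeStates f = O := by
  refine ⟨fun v => if (v, v + 1) ∈ O then some true
    else if (v + 1, v) ∈ O then some false else none, ?_⟩
  ext ⟨u, v⟩
  simp only [ofEdgeStates, mem_filter, mem_univ, true_and]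
  constructor
  · rintro (⟨rfl, h⟩ | ⟨rfl, h⟩) <;> split_ifs at h <;> simp_all
  · intro hp
    obtain ⟨hadj, hrev⟩ := hO _ hp
    dsimp only at hadj hrev
    rcases (cycleGraph_adj_iff (by omega)).1 hadj with rfl | rfl
    · exact Or.inl ⟨rfl, if_pos hp⟩
    · exact Or.inr ⟨rfl, by rw [if_neg hrev, if_pos hp]⟩

theorem ofEdgeStates_injective (hn : 3 ≤ n) : Function.Injective (ofEdgeStates (n := n)) := by
  intro f g h
  funext v
  have h_true := mem_ofEdgeStates_add_one hn g v
  have h_false := add_one_mem_ofEdgeStates hn g v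
  rw [← h, mem_ofEdgeStates_add_one hn] at h_true
  rw [← h, add_one_mem_ofEdgeStates hn] at h_false
  revert h_true h_false
  cases f v <;> cases g v <;> simp

theorem isAdmissible_ofEdgeStates_iff (hn : 3 ≤ n) (f : Fin n → Option Bool) :
    IsAdmissible (cycleGraph n) (fun _ _ => (1 : ℝ)) (ofEdgeStates f) ↔
      ∀ b, ¬ OneWayMajority b f := by
  have h_bwd (v : Fin n) : (v, v + -1) ∈ ofEdgeStates f ↔ f (v + -1) = some false := by
    simpa using add_one_mem_ofEdgeStates hn f (v + -1)
  have h_fwd (v : Fin n) : (v + -1, v) ∈ ofEdgeStates f ↔ f (v + -1) = some true := by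
    simpa using mem_ofEdgeStates_add_one hn f (v + -1)
  have h_count : #{v | (v, v + -1) ∈ ofEdgeStates f} = #{v | f v = some false} :=
    card_equiv (Equiv.addRight (-1)) fun v => by simp [h_bwd]
  have h_compat_bwd : (∀ v, (v + -1, v) ∉ ofEdgeStates f) ↔ ∀ v, f v ≠ some true := by
    simp only [h_fwd]
    exact ⟨fun h v => by simpa using h (v + 1), fun h v => h _⟩
  rw [isAdmissible_cycleGraph_one_iff (by omega)]
  simp only [or_imp, forall_and, forall_eq, h_compat_bwd, h_count, add_one_mem_ofEdgeStates hn,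
    mem_ofEdgeStates_add_one hn, Bool.forall_bool, OneWayMajority, Fintype.card_fin,
    Bool.not_true, Bool.not_false, not_and, not_le]
  exact and_comm

end

theorem ncard_setOf_isPO_isAdmissible_cycleGraph {n : ℕ} [NeZero n] (hn : 3 ≤ n) :
    Set.ncard {O : Finset (Fin n × Fin n) | IsPO (cycleGraph n) O ∧
        IsAdmissible (cycleGraph n) (fun _ _ => (1 : ℝ)) O} =
      3 ^ n - 2 * #{S : Finset (Fin n) | n ≤ 2 * #S} := by
  have h_image : {O : Finset (Fin n × Fin n) | IsPO (cycleGraph n) O ∧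
        IsAdmissible (cycleGraph n) (fun _ _ => (1 : ℝ)) O} =
      ofEdgeStates '' ↑({f | ∀ b, ¬ OneWayMajority b f} : Finset (Fin n → Option Bool)) := by
    ext O
    simp only [Set.mem_ofPred_eq, Set.mem_image, coe_filter, mem_univ, true_and]
    constructor
    · rintro ⟨hPO, hadm⟩
      obtain ⟨f, rfl⟩ := exists_ofEdgeStates_eq hn hPO
      exact ⟨f, (isAdmissible_ofEdgeStates_iff hn f).1 hadm, rfl⟩
    · rintro ⟨f, hf, rfl⟩
      exact ⟨isPO_ofEdgeStates hn f, (isAdmissible_ofEdgeStates_iff hn f).2 hf⟩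
  rw [h_image, Set.ncard_image_of_injective _ (ofEdgeStates_injective hn), Set.ncard_coe_finset,
    card_filter_forall_not_oneWayMajority, Fintype.card_fin]

/-- The number of SEMI-admissible partial orientations of the cycle graph `Cₙ` is
`3ⁿ - 2ⁿ` for odd `n` and `3ⁿ - 2ⁿ - (n choose n/2)` for even `n`. -/
theorem semi_admissible_cycleGraph_card (n : ℕ) (hn : 3 ≤ n) :
    (Odd n → Set.ncard {O : Finset (Fin n × Fin n) | IsPO (SimpleGraph.cycleGraph n) O ∧
        IsAdmissible (SimpleGraph.cycleGraph n) (fun _ _ => (1 : ℝ)) O} =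
      3 ^ n - 2 ^ n) ∧
    (Even n → Set.ncard {O : Finset (Fin n × Fin n) | IsPO (SimpleGraph.cycleGraph n) O ∧
        IsAdmissible (SimpleGraph.cycleGraph n) (fun _ _ => (1 : ℝ)) O} =
      3 ^ n - 2 ^ n - n.choose (n / 2)) := by
  have : NeZero n := ⟨by omega⟩
  have h_count := ncard_setOf_isPO_isAdmissible_cycleGraph hn
  have h_half := two_mul_card_filter_card_le_two_mul_card (Fin n)
  have h_middle := card_filter_two_mul_card_eq (Fin n)
  simp only [Fintype.card_fin] at h_half h_middle
  refine ⟨fun h_odd => ?_, fun h_even => ?_⟩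
  · rw [if_neg (Nat.not_even_iff_odd.2 h_odd)] at h_middle
    omega
  · rw [if_pos h_even] at h_middle
    omega
end
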